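/- arXiv:1502.02505 — 6 statements merged into one kernel-verified Lean document; each statement's English description precedes it below -/
import Mathlib

section
/- Let l1, l2, l3 be integers, each at least 2, and set L = l1 + l2 + l3. Then the cyclic sum of depth-3 multiple zeta values satisfies ζ(l1,l2,l3) + ζ(l2,l3,l1) + ζ(l3,l1,l2) = −ζ(l1)·ζ(l2)·ζ(l3) + ζ(l1,l2)·ζ(l3) + ζ(l2,l3)·ζ(l1) + ζ(l3,l1)·ζ(l2) + ζ(L). (Depth-3 case of Theorem 1 of the paper, restricted to convergent indices, where the characteristic factor equals 1.) -/
open Classical in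
/-- The multiple zeta value `ζ(l 0, l 1, …, l (n-1)) =
∑_{m 0 > m 1 > ⋯ > m (n-1) ≥ 1} ∏ i, 1 / (m i) ^ (l i)`. -/
noncomputable def mzv {n : ℕ} (l : Fin n → ℕ) : ℝ :=
  ∑' m : Fin n → ℕ,
    if StrictAnti m ∧ ∀ i, 1 ≤ m i then ∏ i, (1 : ℝ) / (m i : ℝ) ^ (l i) else 0

/-! ### Auxiliary definitions: zeta sums over explicit product types -/

noncomputable def zf1 (k m : ℕ) : ℝ := if 1 ≤ m then 1 / (m : ℝ) ^ k else 0

noncomputable def zf2 (a b : ℕ) (p : ℕ × ℕ) : ℝ :=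
  if p.2 < p.1 ∧ 1 ≤ p.2 then 1 / (p.1 : ℝ) ^ a * (1 / (p.2 : ℝ) ^ b) else 0

noncomputable def zf3 (a b c : ℕ) (t : ℕ × ℕ × ℕ) : ℝ :=
  if t.2.1 < t.1 ∧ t.2.2 < t.2.1 ∧ 1 ≤ t.2.2 then
    1 / (t.1 : ℝ) ^ a * (1 / (t.2.1 : ℝ) ^ b) * (1 / (t.2.2 : ℝ) ^ c) else 0

noncomputable def Z1 (k : ℕ) : ℝ := ∑' m, zf1 k m
noncomputable def Z2 (a b : ℕ) : ℝ := ∑' p, zf2 a b p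
noncomputable def Z3 (a b c : ℕ) : ℝ := ∑' t, zf3 a b c t

lemma zf1_nonneg (k m : ℕ) : 0 ≤ zf1 k m := by unfold zf1; split_ifs <;> positivity
lemma zf2_nonneg (a b : ℕ) (p : ℕ × ℕ) : 0 ≤ zf2 a b p := by
  unfold zf2; split_ifs <;> positivity
lemma zf3_nonneg (a b c : ℕ) (t : ℕ × ℕ × ℕ) : 0 ≤ zf3 a b c t := by
  unfold zf3; split_ifs <;> positivity

lemma zf1_summable {k : ℕ} (hk : 2 ≤ k) : Summable (zf1 k) := by
  refine Summable.of_nonneg_of_le (zf1_nonneg k) (fun m => ?_)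
    (Real.summable_one_div_nat_pow.mpr (show 1 < k by omega))
  unfold zf1; split_ifs
  · exact le_rfl
  · positivity

lemma zf2_le (a b : ℕ) (p : ℕ × ℕ) : zf2 a b p ≤ zf1 a p.1 * zf1 b p.2 := by
  by_cases h : p.2 < p.1 ∧ 1 ≤ p.2
  · have h1 : 1 ≤ p.1 := by omega
    simp [zf2, zf1, h, h1, h.2]
  · simp only [zf2, if_neg h]
    exact mul_nonneg (zf1_nonneg _ _) (zf1_nonneg _ _)

lemma zf2_summable {a b : ℕ} (ha : 2 ≤ a) (hb : 2 ≤ b) : Summable (zf2 a b) :=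
  Summable.of_nonneg_of_le (zf2_nonneg a b) (zf2_le a b)
    ((zf1_summable ha).mul_of_nonneg (zf1_summable hb)
      (fun m => zf1_nonneg a m) (fun m => zf1_nonneg b m))

lemma norm_of_nonneg_summable {ι : Type*} {f : ι → ℝ} (h0 : ∀ i, 0 ≤ f i)
    (hs : Summable f) : Summable fun i => ‖f i‖ :=
  hs.congr fun i => by rw [Real.norm_eq_abs, abs_of_nonneg (h0 i)]

lemma summable_ite {α : Type*} {F : α → ℝ} (hF : Summable F) (P : α → Prop)
    [DecidablePred P] : Summable fun x => if P x then F x else 0 :=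
  (hF.indicator {x | P x}).congr fun x => by
    by_cases h : P x
    · rw [if_pos h]; exact Set.indicator_of_mem h F
    · rw [if_neg h]; exact Set.indicator_of_notMem h F

/-! ### Stuffle products -/

lemma stuffle11 {a b : ℕ} (ha : 2 ≤ a) (hb : 2 ≤ b) :
    Z1 a * Z1 b = Z2 a b + Z2 b a + Z1 (a + b) := by
  have hsa := zf1_summable ha
  have hsb := zf1_summable hb
  have hF : Summable (fun z : ℕ × ℕ => zf1 a z.1 * zf1 b z.2) :=
    hsa.mul_of_nonneg hsb (fun m => zf1_nonneg a m) (fun m => zf1_nonneg b m)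
  have hprod : Z1 a * Z1 b = ∑' z : ℕ × ℕ, zf1 a z.1 * zf1 b z.2 := by
    unfold Z1
    exact tsum_mul_tsum_of_summable_norm
      (norm_of_nonneg_summable (zf1_nonneg a) hsa)
      (norm_of_nonneg_summable (zf1_nonneg b) hsb)
  have hsplit : ∀ z : ℕ × ℕ, zf1 a z.1 * zf1 b z.2 =
      (if z.2 < z.1 then zf1 a z.1 * zf1 b z.2 else 0)
      + (if z.1 < z.2 then zf1 a z.1 * zf1 b z.2 else 0)
      + (if z.1 = z.2 then zf1 a z.1 * zf1 b z.2 else 0) := by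
    intro z
    split_ifs <;> first | ring1 | (exfalso; omega)
  have s1 : Summable (fun z : ℕ × ℕ => if z.2 < z.1 then zf1 a z.1 * zf1 b z.2 else 0) :=
    summable_ite hF _
  have s2 : Summable (fun z : ℕ × ℕ => if z.1 < z.2 then zf1 a z.1 * zf1 b z.2 else 0) :=
    summable_ite hF _
  have s3 : Summable (fun z : ℕ × ℕ => if z.1 = z.2 then zf1 a z.1 * zf1 b z.2 else 0) :=
    summable_ite hF _
  have p1 : (∑' z : ℕ × ℕ, if z.2 < z.1 then zf1 a z.1 * zf1 b z.2 else 0) = Z2 a b := by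
    unfold Z2
    refine tsum_congr fun z => ?_
    simp only [zf1, zf2]
    split_ifs <;> first | ring1 | (exfalso; omega)
  have p2 : (∑' z : ℕ × ℕ, if z.1 < z.2 then zf1 a z.1 * zf1 b z.2 else 0) = Z2 b a := by
    unfold Z2
    refine Eq.trans (tsum_congr fun z => ?_)
      (Equiv.tsum_eq ⟨fun z : ℕ × ℕ => (z.2, z.1), fun z => (z.2, z.1),
        fun z => rfl, fun z => rfl⟩ (zf2 b a))
    simp only [zf1, zf2, Equiv.coe_fn_mk]
    split_ifs <;> first | ring1 | (exfalso; omega)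
  have p3 : (∑' z : ℕ × ℕ, if z.1 = z.2 then zf1 a z.1 * zf1 b z.2 else 0) = Z1 (a + b) := by
    unfold Z1
    have hinj : Function.Injective (fun m : ℕ => ((m, m) : ℕ × ℕ)) :=
      fun x y h => congrArg Prod.fst h
    have hsupp : Function.support
        (fun z : ℕ × ℕ => if z.1 = z.2 then zf1 a z.1 * zf1 b z.2 else 0)
        ⊆ Set.range (fun m : ℕ => ((m, m) : ℕ × ℕ)) := by
      intro z hz
      have h : z.1 = z.2 := by
        by_contra hne
        exact hz (if_neg hne)
      exact ⟨z.1, Prod.ext_iff.mpr ⟨rfl, h⟩⟩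
    refine Eq.trans (hinj.tsum_eq hsupp).symm (tsum_congr fun m => ?_)
    simp only [zf1]
    split_ifs <;> first | ring1 | (rw [pow_add]; ring1) | (exfalso; omega)
  rw [hprod, tsum_congr hsplit, Summable.tsum_add (s1.add s2) s3, Summable.tsum_add s1 s2, p1, p2, p3]

lemma stuffle21 {a b c : ℕ} (ha : 2 ≤ a) (hb : 2 ≤ b) (hc : 2 ≤ c) :
    Z2 a b * Z1 c = Z3 a b c + Z3 a c b + Z3 c a b + Z2 (a + c) b + Z2 a (b + c) := by
  have hs2 := zf2_summable ha hb
  have hs1 := zf1_summable hc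
  have hF : Summable (fun x : (ℕ × ℕ) × ℕ => zf2 a b x.1 * zf1 c x.2) :=
    hs2.mul_of_nonneg hs1 (fun p => zf2_nonneg a b p) (fun m => zf1_nonneg c m)
  have hprod : Z2 a b * Z1 c = ∑' x : (ℕ × ℕ) × ℕ, zf2 a b x.1 * zf1 c x.2 := by
    unfold Z2 Z1
    exact tsum_mul_tsum_of_summable_norm
      (norm_of_nonneg_summable (zf2_nonneg a b) hs2)
      (norm_of_nonneg_summable (zf1_nonneg c) hs1)
  have hsplit : ∀ x : (ℕ × ℕ) × ℕ, zf2 a b x.1 * zf1 c x.2 =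
      (if x.2 < x.1.2 then zf2 a b x.1 * zf1 c x.2 else 0)
      + (if x.2 = x.1.2 then zf2 a b x.1 * zf1 c x.2 else 0)
      + (if x.1.2 < x.2 ∧ x.2 < x.1.1 then zf2 a b x.1 * zf1 c x.2 else 0)
      + (if x.2 = x.1.1 then zf2 a b x.1 * zf1 c x.2 else 0)
      + (if x.1.1 < x.2 then zf2 a b x.1 * zf1 c x.2 else 0) := by
    intro x
    simp only [zf1, zf2]
    split_ifs <;> first | ring1 | (exfalso; omega)
  have s1 : Summable (fun x : (ℕ × ℕ) × ℕ =>
      if x.2 < x.1.2 then zf2 a b x.1 * zf1 c x.2 else 0) := summable_ite hF _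
  have s2 : Summable (fun x : (ℕ × ℕ) × ℕ =>
      if x.2 = x.1.2 then zf2 a b x.1 * zf1 c x.2 else 0) := summable_ite hF _
  have s3 : Summable (fun x : (ℕ × ℕ) × ℕ =>
      if x.1.2 < x.2 ∧ x.2 < x.1.1 then zf2 a b x.1 * zf1 c x.2 else 0) := summable_ite hF _
  have s4 : Summable (fun x : (ℕ × ℕ) × ℕ =>
      if x.2 = x.1.1 then zf2 a b x.1 * zf1 c x.2 else 0) := summable_ite hF _
  have s5 : Summable (fun x : (ℕ × ℕ) × ℕ =>
      if x.1.1 < x.2 then zf2 a b x.1 * zf1 c x.2 else 0) := summable_ite hF _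
  have p1 : (∑' x : (ℕ × ℕ) × ℕ, if x.2 < x.1.2 then zf2 a b x.1 * zf1 c x.2 else 0)
      = Z3 a b c := by
    unfold Z3
    refine Eq.trans (tsum_congr fun x => ?_)
      (Equiv.tsum_eq (Equiv.prodAssoc ℕ ℕ ℕ) (zf3 a b c))
    simp only [zf1, zf2, zf3, Equiv.prodAssoc_apply]
    split_ifs <;> first | ring1 | (exfalso; omega)
  have p2 : (∑' x : (ℕ × ℕ) × ℕ, if x.2 = x.1.2 then zf2 a b x.1 * zf1 c x.2 else 0)
      = Z2 a (b + c) := by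
    unfold Z2
    have hinj : Function.Injective (fun p : ℕ × ℕ => ((p.1, p.2), p.2)) :=
      fun p q h => congrArg Prod.fst h
    have hsupp : Function.support
        (fun x : (ℕ × ℕ) × ℕ => if x.2 = x.1.2 then zf2 a b x.1 * zf1 c x.2 else 0)
        ⊆ Set.range (fun p : ℕ × ℕ => ((p.1, p.2), p.2)) := by
      intro x hx
      have h : x.2 = x.1.2 := by
        by_contra hne
        exact hx (if_neg hne)
      exact ⟨x.1, Prod.ext_iff.mpr ⟨rfl, h.symm⟩⟩
    refine Eq.trans (hinj.tsum_eq hsupp).symm (tsum_congr fun p => ?_)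
    simp only [zf1, zf2]
    split_ifs <;> first | ring1 | (rw [pow_add]; ring1) | (exfalso; omega)
  have p3 : (∑' x : (ℕ × ℕ) × ℕ,
      if x.1.2 < x.2 ∧ x.2 < x.1.1 then zf2 a b x.1 * zf1 c x.2 else 0) = Z3 a c b := by
    unfold Z3
    refine Eq.trans (tsum_congr fun x => ?_)
      (Equiv.tsum_eq ⟨fun x : (ℕ × ℕ) × ℕ => (x.1.1, x.2, x.1.2),
        fun t : ℕ × ℕ × ℕ => ((t.1, t.2.2), t.2.1), fun x => rfl, fun t => rfl⟩
        (zf3 a c b))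
    simp only [zf1, zf2, zf3, Equiv.coe_fn_mk]
    split_ifs <;> first | ring1 | (exfalso; omega)
  have p4 : (∑' x : (ℕ × ℕ) × ℕ, if x.2 = x.1.1 then zf2 a b x.1 * zf1 c x.2 else 0)
      = Z2 (a + c) b := by
    unfold Z2
    have hinj : Function.Injective (fun p : ℕ × ℕ => ((p.1, p.2), p.1)) :=
      fun p q h => congrArg Prod.fst h
    have hsupp : Function.support
        (fun x : (ℕ × ℕ) × ℕ => if x.2 = x.1.1 then zf2 a b x.1 * zf1 c x.2 else 0)
        ⊆ Set.range (fun p : ℕ × ℕ => ((p.1, p.2), p.1)) := by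
      intro x hx
      have h : x.2 = x.1.1 := by
        by_contra hne
        exact hx (if_neg hne)
      exact ⟨x.1, Prod.ext_iff.mpr ⟨rfl, h.symm⟩⟩
    refine Eq.trans (hinj.tsum_eq hsupp).symm (tsum_congr fun p => ?_)
    simp only [zf1, zf2]
    split_ifs <;> first | ring1 | (rw [pow_add]; ring1) | (exfalso; omega)
  have p5 : (∑' x : (ℕ × ℕ) × ℕ, if x.1.1 < x.2 then zf2 a b x.1 * zf1 c x.2 else 0)
      = Z3 c a b := by
    unfold Z3
    refine Eq.trans (tsum_congr fun x => ?_)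
      (Equiv.tsum_eq ⟨fun x : (ℕ × ℕ) × ℕ => (x.2, x.1.1, x.1.2),
        fun t : ℕ × ℕ × ℕ => ((t.2.1, t.2.2), t.1), fun x => rfl, fun t => rfl⟩
        (zf3 c a b))
    simp only [zf1, zf2, zf3, Equiv.coe_fn_mk]
    split_ifs <;> first | ring1 | (exfalso; omega)
  rw [hprod, tsum_congr hsplit, Summable.tsum_add (((s1.add s2).add s3).add s4) s5,
    Summable.tsum_add ((s1.add s2).add s3) s4, Summable.tsum_add (s1.add s2) s3, Summable.tsum_add s1 s2,
    p1, p2, p3, p4, p5]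
  ring

/-! ### Identification of `mzv` with the `Z` sums -/

lemma strictAnti_fin2 {m : Fin 2 → ℕ} : StrictAnti m ↔ m 1 < m 0 := by
  constructor
  · intro h; exact h (by decide : (0 : Fin 2) < 1)
  · intro h i j hij
    fin_cases i <;> fin_cases j <;> first | exact absurd hij (by decide) | simpa using h

lemma strictAnti_fin3 {m : Fin 3 → ℕ} : StrictAnti m ↔ m 1 < m 0 ∧ m 2 < m 1 := by
  constructor
  · intro h; exact ⟨h (by decide : (0 : Fin 3) < 1), h (by decide : (1 : Fin 3) < 2)⟩
  · intro h i j hij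
    fin_cases i <;> fin_cases j <;>
      first
        | exact absurd hij (by decide)
        | simpa using h.1
        | simpa using h.2
        | simpa using h.2.trans h.1

lemma mzv_one (k : ℕ) : mzv ![k] = Z1 k := by
  unfold mzv Z1
  rw [← Equiv.tsum_eq
    (⟨fun x : ℕ => fun _ : Fin 1 => x, fun m => m 0, fun x => rfl,
      fun m => funext fun i => congrArg m (Subsingleton.elim 0 i)⟩ : ℕ ≃ (Fin 1 → ℕ))]
  refine tsum_congr fun x => ?_
  simp only [Equiv.coe_fn_mk]
  have hcond : (StrictAnti (fun _ : Fin 1 => x) ∧ ∀ i : Fin 1, 1 ≤ x) ↔ 1 ≤ x :=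
    ⟨fun h => h.2 0, fun h => ⟨fun i j hij => absurd (Subsingleton.elim i j) hij.ne,
      fun _ => h⟩⟩
  have hval : (∏ i : Fin 1, (1 : ℝ) / (x : ℝ) ^ (![k] i)) = 1 / (x : ℝ) ^ k := by
    simp
  simp only [zf1]
  exact if_congr hcond hval rfl

lemma mzv_two (a b : ℕ) : mzv ![a, b] = Z2 a b := by
  unfold mzv Z2
  rw [← Equiv.tsum_eq
    (⟨fun p : ℕ × ℕ => ![p.1, p.2], fun m => (m 0, m 1), fun p => rfl,
      fun m => by funext i; fin_cases i <;> rfl⟩ : ℕ × ℕ ≃ (Fin 2 → ℕ))]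
  refine tsum_congr fun p => ?_
  have hcond : (StrictAnti ![p.1, p.2] ∧ ∀ i, 1 ≤ ![p.1, p.2] i)
      ↔ (p.2 < p.1 ∧ 1 ≤ p.2) := by
    rw [strictAnti_fin2, Fin.forall_fin_two]
    simp only [Matrix.cons_val_zero, Matrix.cons_val_one, Matrix.head_cons]
    omega
  have hval : (∏ i, (1 : ℝ) / ((![p.1, p.2] i : ℕ) : ℝ) ^ (![a, b] i))
      = 1 / (p.1 : ℝ) ^ a * (1 / (p.2 : ℝ) ^ b) := by
    simp [Fin.prod_univ_two]; ring
  simp only [zf2]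
  exact if_congr hcond hval rfl

lemma mzv_three (a b c : ℕ) : mzv ![a, b, c] = Z3 a b c := by
  unfold mzv Z3
  rw [← Equiv.tsum_eq
    (⟨fun t : ℕ × ℕ × ℕ => ![t.1, t.2.1, t.2.2], fun m => (m 0, m 1, m 2),
      fun t => rfl, fun m => by funext i; fin_cases i <;> rfl⟩ :
        ℕ × ℕ × ℕ ≃ (Fin 3 → ℕ))]
  refine tsum_congr fun t => ?_
  have hcond : (StrictAnti ![t.1, t.2.1, t.2.2] ∧ ∀ i, 1 ≤ ![t.1, t.2.1, t.2.2] i)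
      ↔ (t.2.1 < t.1 ∧ t.2.2 < t.2.1 ∧ 1 ≤ t.2.2) := by
    rw [strictAnti_fin3, Fin.forall_fin_succ, Fin.forall_fin_two]
    simp only [Matrix.cons_val_zero, Matrix.cons_val_one, Matrix.head_cons,
      Fin.succ_zero_eq_one, Fin.succ_one_eq_two, Matrix.cons_val_two, Matrix.tail_cons]
    omega
  have hval : (∏ i, (1 : ℝ) / ((![t.1, t.2.1, t.2.2] i : ℕ) : ℝ) ^ (![a, b, c] i))
      = 1 / (t.1 : ℝ) ^ a * (1 / (t.2.1 : ℝ) ^ b) * (1 / (t.2.2 : ℝ) ^ c) := by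
    simp [Fin.prod_univ_three]; ring
  simp only [zf3]
  exact if_congr hcond hval rfl

theorem cyclic_sum_depth_three (l1 l2 l3 : ℕ)
    (h1 : 2 ≤ l1) (h2 : 2 ≤ l2) (h3 : 2 ≤ l3) :
    mzv ![l1, l2, l3] + mzv ![l2, l3, l1] + mzv ![l3, l1, l2] =
      -(mzv ![l1] * mzv ![l2] * mzv ![l3])
        + mzv ![l1, l2] * mzv ![l3] + mzv ![l2, l3] * mzv ![l1]
        + mzv ![l3, l1] * mzv ![l2]
        + mzv ![l1 + l2 + l3] := by
  rw [mzv_three, mzv_three, mzv_three, mzv_two, mzv_two, mzv_two,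
    mzv_one, mzv_one, mzv_one, mzv_one]
  have hB := stuffle21 h2 h3 h1
  have hC := stuffle21 h3 h1 h2
  have hD := stuffle21 h2 h1 h3
  have hE := stuffle11 h1 h2
  have hFq := stuffle11 (show 2 ≤ l1 + l2 by omega) h3
  have hG : Z1 l1 * Z1 l2 * Z1 l3
      = Z2 l1 l2 * Z1 l3 + Z2 l2 l1 * Z1 l3 + Z1 (l1 + l2) * Z1 l3 := by
    rw [hE]; ring
  have q1 : Z2 l2 (l3 + l1) = Z2 l2 (l1 + l3) := by rw [Nat.add_comm l3 l1]
  have q2 : Z2 (l2 + l1) l3 = Z2 (l1 + l2) l3 := by rw [Nat.add_comm l2 l1]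
  have q3 : Z2 (l3 + l2) l1 = Z2 (l2 + l3) l1 := by rw [Nat.add_comm l3 l2]
  linarith [hB, hC, hD, hG, hFq, q1, q2, q3]
end

section
/- Let l1, l2, l3, l4 be integers, each at least 2, and set L = l1 + l2 + l3 + l4. Then ζ(l1,l2,l3,l4) + ζ(l2,l3,l4,l1) + ζ(l3,l4,l1,l2) + ζ(l4,l1,l2,l3) = ζ(l1)ζ(l2)ζ(l3)ζ(l4) − [ζ(l1,l2)ζ(l3)ζ(l4) + ζ(l2,l3)ζ(l4)ζ(l1) + ζ(l3,l4)ζ(l1)ζ(l2) + ζ(l4,l1)ζ(l2)ζ(l3)] + ζ(l1,l2)ζ(l3,l4) + ζ(l2,l3)ζ(l4,l1) + ζ(l1,l2,l3)ζ(l4) + ζ(l2,l3,l4)ζ(l1) + ζ(l3,l4,l1)ζ(l2) + ζ(l4,l1,l2)ζ(l3) − ζ(L). (Depth-4 case of Theorem 1 of the paper, restricted to convergent indices, where the characteristic factor equals 1.) -/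
/-!
Sum `∏ i, 1 / m i ^ l i` over all of `ℕ⁴` and sort the tuples `m` by their cyclic descents
`m (i + 1) < m i`, `i ∈ ℤ/4`. No tuple descends at all four places, and a tuple descends nowhere
exactly when it is constant. Inclusion–exclusion over the four descent events thus writes the sum
over constant tuples, `ζ(L)`, as an alternating sum of sums over tuples with prescribed descents.
Each of those factors along the blocks of consecutive descents into a product of multiple zeta
values, and rotating the indices reduces every block pattern to one starting at `0`.
-/

open Set

-- No positivity condition on `m` is needed: an entry `m i = 0` contributes `1 / 0 = 0`
-- whenever `l i ≠ 0`.
noncomputable def mzvSummand {n : ℕ} (l m : Fin n → ℕ) : ℝ := ∏ i, 1 / (m i : ℝ) ^ l i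

noncomputable def mzvOn {n : ℕ} (l : Fin n → ℕ) (s : Set (Fin n → ℕ)) : ℝ :=
  ∑' m, s.indicator (mzvSummand l) m

section General

variable {a b n : ℕ}

lemma mzvSummand_nonneg (l m : Fin n → ℕ) : 0 ≤ mzvSummand l m := by
  unfold mzvSummand; positivity

lemma mzvSummand_append (l m : Fin a → ℕ) (l' m' : Fin b → ℕ) :
    mzvSummand (Fin.append l l') (Fin.append m m') = mzvSummand l m * mzvSummand l' m' := by
  simp only [mzvSummand, Fin.prod_univ_add, Fin.append_left, Fin.append_right]

lemma summable_mzvSummand_append {l : Fin a → ℕ} {l' : Fin b → ℕ}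
    (hl : Summable (mzvSummand l)) (hl' : Summable (mzvSummand l')) :
    Summable (mzvSummand (Fin.append l l')) := by
  rw [← (Fin.appendEquiv a b).summable_iff]
  exact (hl.mul_of_nonneg hl' (mzvSummand_nonneg l) (mzvSummand_nonneg l')).congr fun p =>
    (mzvSummand_append _ _ _ _).symm

lemma summable_mzvSummand_of_fin_one {l : Fin 1 → ℕ} (hl : 2 ≤ l 0) :
    Summable (mzvSummand l) := by
  rw [← (Equiv.funUnique (Fin 1) ℕ).symm.summable_iff]
  simpa [Function.comp_def, mzvSummand] using Real.summable_one_div_nat_pow.mpr hl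

lemma summable_mzvSummand {l : Fin n → ℕ} (hl : ∀ i, 2 ≤ l i) :
    Summable (mzvSummand l) := by
  induction n with
  | zero => exact (hasSum_fintype _).summable
  | succ n ih =>
    rw [← Fin.append_castAdd_natAdd (f := l)]
    exact summable_mzvSummand_append (ih fun i => hl _) (summable_mzvSummand_of_fin_one (hl _))

lemma mzvOn_append {l : Fin a → ℕ} {l' : Fin b → ℕ}
    (hl : ∀ i, 2 ≤ l i) (hl' : ∀ i, 2 ≤ l' i) (s : Set (Fin a → ℕ))
    (t : Set (Fin b → ℕ)) :
    mzvOn (Fin.append l l') (Fin.appendEquiv a b '' s ×ˢ t) = mzvOn l s * mzvOn l' t := by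
  have hs := (summable_mzvSummand hl).indicator s
  have ht := (summable_mzvSummand hl').indicator t
  unfold mzvOn
  rw [← (Fin.appendEquiv a b).tsum_eq, hs.tsum_mul_tsum ht
    (hs.mul_of_nonneg ht (indicator_nonneg fun m _ => mzvSummand_nonneg l m)
      (indicator_nonneg fun m _ => mzvSummand_nonneg l' m))]
  refine tsum_congr fun p => ?_
  rw [Set.indicator_image (Fin.appendEquiv a b).injective]
  obtain ⟨m, m'⟩ := p
  by_cases hm : m ∈ s <;> by_cases hm' : m' ∈ t <;> simp [hm, hm']
  exact mzvSummand_append l m l' m'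

lemma hasSum_mzvOn {l : Fin n → ℕ} (hl : ∀ i, 2 ≤ l i) (s : Set (Fin n → ℕ)) :
    HasSum (s.indicator (mzvSummand l)) (mzvOn l s) :=
  ((summable_mzvSummand hl).indicator s).hasSum

lemma mzvOn_comp_perm (l : Fin n → ℕ) (σ : Equiv.Perm (Fin n)) (s : Set (Fin n → ℕ)) :
    mzvOn (l ∘ σ) s = mzvOn l ((· ∘ σ) ⁻¹' s) := by
  unfold mzvOn
  rw [← (σ.symm.arrowCongr (Equiv.refl ℕ)).tsum_eq]
  refine tsum_congr fun m => ?_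
  change s.indicator _ (m ∘ σ) = ((· ∘ σ) ⁻¹' s).indicator _ m
  by_cases hm : m ∘ σ ∈ s
  · rw [indicator_of_mem hm, indicator_of_mem (show m ∈ (· ∘ σ) ⁻¹' s from hm)]
    exact Equiv.prod_comp σ fun i => 1 / (m i : ℝ) ^ l i
  · rw [indicator_of_notMem hm, indicator_of_notMem (show m ∉ (· ∘ σ) ⁻¹' s from hm)]

lemma mzv_eq_mzvOn {l : Fin n → ℕ} (hl : ∀ i, l i ≠ 0) :
    mzv l = mzvOn l {m | StrictAnti m} := by
  classical
  refine tsum_congr fun m => ?_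
  by_cases hm : ∀ i, 1 ≤ m i
  · simp [indicator_apply, hm, mzvSummand]
  · obtain ⟨i, hi⟩ := not_forall.mp hm
    have h0 : mzvSummand l m = 0 :=
      Finset.prod_eq_zero (Finset.mem_univ i) (by simp [show m i = 0 by omega, hl i])
    simp [indicator_apply, h0, hm]

lemma mzv_singleton {k : ℕ} (hk : k ≠ 0) : mzv ![k] = ∑' j : ℕ, 1 / (j : ℝ) ^ k := by
  rw [mzv_eq_mzvOn (by simpa using hk), mzvOn, ← (Equiv.funUnique (Fin 1) ℕ).symm.tsum_eq]
  refine tsum_congr fun j => ?_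
  simp [mzvSummand, Subsingleton.strictAnti]

lemma mzvOn_range_const {l : Fin n → ℕ} (hl : ∑ i, l i ≠ 0) :
    mzvOn l (range (Function.const (Fin n))) = mzv ![∑ i, l i] := by
  have : Nonempty (Fin n) := by
    rcases n with _ | n
    · simp at hl
    · exact ⟨0⟩
  rw [mzv_singleton hl, mzvOn, ← tsum_subtype, tsum_range _ Function.const_injective]
  refine tsum_congr fun k => ?_
  simp [mzvSummand, Finset.prod_pow_eq_pow_sum]

lemma mem_appendEquiv_image_prod {s : Set (Fin a → ℕ)} {t : Set (Fin b → ℕ)}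
    {m : Fin (a + b) → ℕ} :
    m ∈ Fin.appendEquiv a b '' s ×ˢ t ↔
      (fun i => m (Fin.castAdd b i)) ∈ s ∧ (fun j => m (Fin.natAdd a j)) ∈ t := by
  rw [Equiv.image_eq_preimage_symm]; rfl

lemma mzvOn_univ_fin_one {k : ℕ} (hk : k ≠ 0) : mzvOn ![k] univ = mzv ![k] := by
  rw [mzv_eq_mzvOn (by simpa using hk)]
  congr
  exact (eq_univ_of_forall fun m => Subsingleton.strictAnti m).symm

end General

-- `i + 1` wraps around in `Fin n`: descents are read cyclically.
def descentSet {n : ℕ} [NeZero n] (i : Fin n) : Set (Fin n → ℕ) := {m | m (i + 1) < m i}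

lemma mem_range_const_iff_forall_notMem_descentSet {m : Fin 4 → ℕ} :
    m ∈ range (Function.const (Fin 4)) ↔ ∀ i, m ∉ descentSet i := by
  simp only [Fin.forall_fin_succ, descentSet, mem_ofPred_eq, not_lt]
  constructor
  · rintro ⟨k, rfl⟩
    simp
  · intro h
    exact ⟨m 0, funext fun i => by fin_cases i <;> simp at h ⊢ <;> omega⟩

lemma indicator_cyclic_inclusion_exclusion (f : (Fin 4 → ℕ) → ℝ) (m : Fin 4 → ℕ) :
    ∑ i, (descentSet i ∩ descentSet (i + 1) ∩ descentSet (i + 2)).indicator f m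
      + (range (Function.const (Fin 4))).indicator f m + ∑ i, (descentSet i).indicator f m
    = f m + ∑ i, (descentSet i ∩ descentSet (i + 1)).indicator f m
      + ∑ i ∈ {0, 1}, (descentSet i ∩ descentSet (i + 2)).indicator f m := by
  classical
  rw [indicator_apply, mem_range_const_iff_forall_notMem_descentSet]
  simp only [Fin.sum_univ_four, Finset.sum_pair (show (0 : Fin 4) ≠ 1 by decide),
    indicator_apply, mem_inter_iff, Fin.forall_fin_succ, descentSet, mem_ofPred_eq]
  by_cases h0 : m 1 < m 0 <;> by_cases h1 : m 2 < m 1 <;> by_cases h2 : m 3 < m 2 <;>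
    by_cases h3 : m 0 < m 3 <;> first | (exfalso; omega) | (simp [h0, h1, h2, h3] <;> ring)

lemma preimage_comp_addLeft_descentSet {n : ℕ} [NeZero n] (i j : Fin n) :
    (· ∘ (i + ·)) ⁻¹' descentSet j = descentSet (i + j) := by
  ext m
  simp [descentSet, add_assoc]

lemma mzvOn_preimage_comp_addLeft (l : Fin 4 → ℕ) (i : Fin 4) (s : Set (Fin 4 → ℕ)) :
    mzvOn l ((· ∘ (i + ·)) ⁻¹' s) = mzvOn ![l i, l (i + 1), l (i + 2), l (i + 3)] s := by
  refine (mzvOn_comp_perm l (Equiv.addLeft i) s).symm.trans (congrArg₂ _ ?_ rfl)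
  funext j
  fin_cases j <;> simp

section Fin4

variable {a b c d : ℕ}

lemma vecCons_four_eq_append_two_two : ![a, b, c, d] = Fin.append ![a, b] ![c, d] := by
  funext i; fin_cases i <;> rfl

lemma vecCons_four_eq_append_three_one : ![a, b, c, d] = Fin.append ![a, b, c] ![d] := by
  funext i; fin_cases i <;> rfl

lemma vecCons_two_eq_append_one_one : ![a, b] = Fin.append ![a] ![b] := by
  funext i; fin_cases i <;> rfl

lemma mzvOn_univ_two (ha : 2 ≤ a) (hb : 2 ≤ b) : mzvOn ![a, b] univ = mzv ![a] * mzv ![b] := by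
  have h := mzvOn_append (l := ![a]) (l' := ![b]) (by simp [ha]) (by simp [hb]) univ univ
  rwa [univ_prod_univ, image_univ_of_surjective (Equiv.surjective _),
    ← vecCons_two_eq_append_one_one, mzvOn_univ_fin_one (by omega),
    mzvOn_univ_fin_one (by omega)] at h

lemma mzvOn_univ_four (ha : 2 ≤ a) (hb : 2 ≤ b) (hc : 2 ≤ c) (hd : 2 ≤ d) :
    mzvOn ![a, b, c, d] univ = mzv ![a] * mzv ![b] * mzv ![c] * mzv ![d] := by
  have h := mzvOn_append (l := ![a, b]) (l' := ![c, d]) (by simp [Fin.forall_fin_two, ha, hb])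
    (by simp [Fin.forall_fin_two, hc, hd]) univ univ
  rw [univ_prod_univ, image_univ_of_surjective (Equiv.surjective _),
    ← vecCons_four_eq_append_two_two, mzvOn_univ_two ha hb, mzvOn_univ_two hc hd] at h
  rw [h]; ring

lemma mzvOn_descentSet_zero (ha : 2 ≤ a) (hb : 2 ≤ b) (hc : 2 ≤ c) (hd : 2 ≤ d) :
    mzvOn ![a, b, c, d] (descentSet 0) = mzv ![a, b] * mzv ![c] * mzv ![d] := by
  have hregion : (descentSet 0 : Set (Fin 4 → ℕ)) =
      Fin.appendEquiv 2 2 '' {m | StrictAnti m} ×ˢ univ := by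
    ext m
    rw [mem_appendEquiv_image_prod]
    simp [descentSet, Fin.strictAnti_iff_succ_lt]
  rw [hregion, vecCons_four_eq_append_two_two, mzvOn_append (by simp [Fin.forall_fin_two, ha, hb])
    (by simp [Fin.forall_fin_two, hc, hd]), ← mzv_eq_mzvOn (by simp [Fin.forall_fin_two]; omega),
    mzvOn_univ_two hc hd, mul_assoc]

lemma mzvOn_descentSet_zero_inter_one (ha : 2 ≤ a) (hb : 2 ≤ b) (hc : 2 ≤ c) (hd : 2 ≤ d) :
    mzvOn ![a, b, c, d] (descentSet 0 ∩ descentSet 1) = mzv ![a, b, c] * mzv ![d] := by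
  have hregion : (descentSet 0 ∩ descentSet 1 : Set (Fin 4 → ℕ)) =
      Fin.appendEquiv 3 1 '' {m | StrictAnti m} ×ˢ univ := by
    ext m
    rw [mem_appendEquiv_image_prod]
    simp [descentSet, Fin.strictAnti_iff_succ_lt, Fin.forall_fin_succ]
  rw [hregion, vecCons_four_eq_append_three_one,
    mzvOn_append (by simp [Fin.forall_fin_succ, ha, hb, hc]) (by simp [hd]),
    ← mzv_eq_mzvOn (by simp [Fin.forall_fin_succ]; omega), mzvOn_univ_fin_one (by omega)]

lemma mzvOn_descentSet_zero_inter_two (ha : 2 ≤ a) (hb : 2 ≤ b) (hc : 2 ≤ c) (hd : 2 ≤ d) :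
    mzvOn ![a, b, c, d] (descentSet 0 ∩ descentSet 2) = mzv ![a, b] * mzv ![c, d] := by
  have hregion : (descentSet 0 ∩ descentSet 2 : Set (Fin 4 → ℕ)) =
      Fin.appendEquiv 2 2 '' {m | StrictAnti m} ×ˢ {m | StrictAnti m} := by
    ext m
    rw [mem_appendEquiv_image_prod]
    simp [descentSet, Fin.strictAnti_iff_succ_lt]
  rw [hregion, vecCons_four_eq_append_two_two, mzvOn_append (by simp [Fin.forall_fin_two, ha, hb])
    (by simp [Fin.forall_fin_two, hc, hd]), ← mzv_eq_mzvOn (by simp [Fin.forall_fin_two]; omega),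
    ← mzv_eq_mzvOn (by simp [Fin.forall_fin_two]; omega)]

lemma mzvOn_descentSet_zero_inter_one_inter_two
    (ha : 2 ≤ a) (hb : 2 ≤ b) (hc : 2 ≤ c) (hd : 2 ≤ d) :
    mzvOn ![a, b, c, d] (descentSet 0 ∩ descentSet 1 ∩ descentSet 2) = mzv ![a, b, c, d] := by
  have hregion : (descentSet 0 ∩ descentSet 1 ∩ descentSet 2 : Set (Fin 4 → ℕ)) =
      {m | StrictAnti m} := by
    ext m
    simp [descentSet, Fin.strictAnti_iff_succ_lt, Fin.forall_fin_succ, and_assoc]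
  rw [hregion, mzv_eq_mzvOn (by simp [Fin.forall_fin_succ]; omega)]

end Fin4

section Shift

variable {l : Fin 4 → ℕ}

lemma mzvOn_descentSet (hl : ∀ i, 2 ≤ l i) (i : Fin 4) :
    mzvOn l (descentSet i) = mzv ![l i, l (i + 1)] * mzv ![l (i + 2)] * mzv ![l (i + 3)] := by
  rw [← mzvOn_descentSet_zero (hl i) (hl (i + 1)) (hl (i + 2)) (hl (i + 3)),
    ← mzvOn_preimage_comp_addLeft, preimage_comp_addLeft_descentSet, add_zero]

lemma mzvOn_descentSet_inter_add_one (hl : ∀ i, 2 ≤ l i) (i : Fin 4) :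
    mzvOn l (descentSet i ∩ descentSet (i + 1)) =
      mzv ![l i, l (i + 1), l (i + 2)] * mzv ![l (i + 3)] := by
  rw [← mzvOn_descentSet_zero_inter_one (hl i) (hl (i + 1)) (hl (i + 2)) (hl (i + 3)),
    ← mzvOn_preimage_comp_addLeft]
  simp only [preimage_inter, preimage_comp_addLeft_descentSet, add_zero]

lemma mzvOn_descentSet_inter_add_two (hl : ∀ i, 2 ≤ l i) (i : Fin 4) :
    mzvOn l (descentSet i ∩ descentSet (i + 2)) =
      mzv ![l i, l (i + 1)] * mzv ![l (i + 2), l (i + 3)] := by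
  rw [← mzvOn_descentSet_zero_inter_two (hl i) (hl (i + 1)) (hl (i + 2)) (hl (i + 3)),
    ← mzvOn_preimage_comp_addLeft]
  simp only [preimage_inter, preimage_comp_addLeft_descentSet, add_zero]

lemma mzvOn_descentSet_inter_add_one_inter_add_two (hl : ∀ i, 2 ≤ l i) (i : Fin 4) :
    mzvOn l (descentSet i ∩ descentSet (i + 1) ∩ descentSet (i + 2)) =
      mzv ![l i, l (i + 1), l (i + 2), l (i + 3)] := by
  rw [← mzvOn_descentSet_zero_inter_one_inter_two (hl i) (hl (i + 1)) (hl (i + 2)) (hl (i + 3)),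
    ← mzvOn_preimage_comp_addLeft]
  simp only [preimage_inter, preimage_comp_addLeft_descentSet, add_zero]

end Shift

lemma mzvOn_cyclic_inclusion_exclusion {l : Fin 4 → ℕ} (hl : ∀ i, 2 ≤ l i) :
    ∑ i, mzvOn l (descentSet i ∩ descentSet (i + 1) ∩ descentSet (i + 2))
      + mzvOn l (range (Function.const (Fin 4))) + ∑ i, mzvOn l (descentSet i)
    = mzvOn l univ + ∑ i, mzvOn l (descentSet i ∩ descentSet (i + 1))
      + ∑ i ∈ {0, 1}, mzvOn l (descentSet i ∩ descentSet (i + 2)) := by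
  have hs := hasSum_mzvOn hl
  have hlhs := ((hasSum_sum (s := Finset.univ) fun i _ =>
      hs (descentSet i ∩ descentSet (i + 1) ∩ descentSet (i + 2))).add
    (hs (range (Function.const (Fin 4))))).add
    (hasSum_sum (s := Finset.univ) fun i _ => hs (descentSet i))
  have hrhs := ((hs univ).add
    (hasSum_sum (s := Finset.univ) fun i _ => hs (descentSet i ∩ descentSet (i + 1)))).add
    (hasSum_sum (s := {0, 1}) fun i _ => hs (descentSet i ∩ descentSet (i + 2)))
  refine hlhs.unique ?_
  convert hrhs using 1
  funext m
  simpa using indicator_cyclic_inclusion_exclusion (mzvSummand l) m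

theorem cyclic_sum_depth_four (l1 l2 l3 l4 : ℕ)
    (h1 : 2 ≤ l1) (h2 : 2 ≤ l2) (h3 : 2 ≤ l3) (h4 : 2 ≤ l4) :
    mzv ![l1, l2, l3, l4] + mzv ![l2, l3, l4, l1] + mzv ![l3, l4, l1, l2]
        + mzv ![l4, l1, l2, l3] =
      mzv ![l1] * mzv ![l2] * mzv ![l3] * mzv ![l4]
        - (mzv ![l1, l2] * mzv ![l3] * mzv ![l4]
            + mzv ![l2, l3] * mzv ![l4] * mzv ![l1]
            + mzv ![l3, l4] * mzv ![l1] * mzv ![l2]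
            + mzv ![l4, l1] * mzv ![l2] * mzv ![l3])
        + mzv ![l1, l2] * mzv ![l3, l4] + mzv ![l2, l3] * mzv ![l4, l1]
        + mzv ![l1, l2, l3] * mzv ![l4] + mzv ![l2, l3, l4] * mzv ![l1]
        + mzv ![l3, l4, l1] * mzv ![l2] + mzv ![l4, l1, l2] * mzv ![l3]
        - mzv ![l1 + l2 + l3 + l4] := by
  have hl : ∀ i : Fin 4, 2 ≤ ![l1, l2, l3, l4] i := by simp [Fin.forall_fin_succ, *]
  have hL : ∑ i, ![l1, l2, l3, l4] i ≠ 0 := by simp [Fin.sum_univ_four]; omega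
  have h := mzvOn_cyclic_inclusion_exclusion hl
  simp only [mzvOn_descentSet_inter_add_one_inter_add_two hl, mzvOn_descentSet hl,
    mzvOn_descentSet_inter_add_one hl, mzvOn_descentSet_inter_add_two hl,
    mzvOn_univ_four h1 h2 h3 h4, mzvOn_range_const hL] at h
  simp [Fin.sum_univ_four] at h
  linarith
end

section
/- Let l1, l2, l3, l4 be integers, each at least 2. Then the symmetric sum over all 24 permutations σ of {1,2,3,4} satisfies Σ_{σ ∈ S4} ζ(l_{σ(1)}, l_{σ(2)}, l_{σ(3)}, l_{σ(4)}) = ζ(l1)ζ(l2)ζ(l3)ζ(l4) − Σ_{{i,j}} ζ(l_i+l_j)·ζ(l_k)·ζ(l_m) + Σ_{{{i,j},{k,m}}} ζ(l_i+l_j)·ζ(l_k+l_m) + 2·Σ_{{i,j,k}} ζ(l_i+l_j+l_k)·ζ(l_m) − 6·ζ(l1+l2+l3+l4), where the first sum on the right runs over the six 2-element subsets {i,j} of {1,2,3,4} (with {k,m} the complementary pair), the second over the three partitions of {1,2,3,4} into two unordered pairs, and the third over the four 3-element subsets {i,j,k} (with m the remaining index). (Case n=4 of Corollary 1 of the paper,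 restricted to convergent indices; this is Hoffman's symmetric-sum theorem in depth 4.) -/
/-
Sorting a tuple of distinct positive integers into decreasing order shows that the symmetric sum
`∑_σ ζ(l_σ(1), …, l_σ(n))` equals the "distinct sum" `D(l) = ∑ ∏ m_i ^ (-l_i)` over all tuples
of pairwise distinct positive integers `m`. Multiplying `D(l_2, …, l_n)` by
`ζ(l_1) = ∑_k k ^ (-l_1)` and splitting according to whether `k` differs from every `m_j` or
equals one of them gives the stuffle recursion
  `ζ(l_1) D(l_2, …, l_n) = D(l_1, …, l_n) + ∑_j D(l_2, …, l_j + l_1, …, l_n)`,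
and unfolding it down to depth one is the formula. All rearrangements are done in `ℝ≥0∞`;
finiteness for exponents `≥ 2` comes from `D(l) ≤ ∏ ζ(l_i)`.
-/

open scoped ENNReal
open Function

@[simp] lemma Matrix.update_vecCons_zero {α : Type*} {n : ℕ} (x y : α) (u : Fin n → α) :
    update (Matrix.vecCons x u) 0 y = Matrix.vecCons y u :=
  Fin.update_cons_zero (α := fun _ => α) x u y

@[simp] lemma Matrix.update_vecCons_succ {α : Type*} {n : ℕ} (x y : α) (u : Fin n → α)
    (i : Fin n) : update (Matrix.vecCons x u) i.succ y = Matrix.vecCons x (update u i y) :=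
  (Fin.cons_update ..).symm

namespace MultipleZeta

variable {α : Type*} {n : ℕ}

noncomputable def strictAntiSum [Preorder α] (f : Fin n → α → ℝ≥0∞) : ℝ≥0∞ :=
  ∑' m : {m : Fin n → α // StrictAnti m}, ∏ i, f i (m.1 i)

noncomputable def embSum (f : Fin n → α → ℝ≥0∞) : ℝ≥0∞ :=
  ∑' m : Fin n ↪ α, ∏ i, f i (m i)

section Sorting

variable [LinearOrder α]

def permStrictAntiToEmbedding (p : Equiv.Perm (Fin n) × {m : Fin n → α // StrictAnti m}) :
    Fin n ↪ α :=
  ⟨p.2.1 ∘ p.1.symm, p.2.2.injective.comp p.1.symm.injective⟩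

lemma permStrictAntiToEmbedding_bijective :
    Bijective (permStrictAntiToEmbedding (α := α) (n := n)) := by
  constructor
  · rintro ⟨σ, m, hm⟩ ⟨τ, m', hm'⟩ h
    have hcomp : m ∘ σ.symm = m' ∘ τ.symm := congrArg DFunLike.coe h
    obtain rfl : m = m' := (hm.range_inj hm').1 <| by
      simpa only [EquivLike.range_comp] using congrArg Set.range hcomp
    have : σ.symm = τ.symm := Equiv.ext fun i => hm.injective (congrFun hcomp i)
    rw [Equiv.symm_bijective.injective this]
  · intro e
    let σ := Tuple.sort (OrderDual.toDual ∘ e)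
    have hanti : Antitone (e ∘ σ) := monotone_toDual_comp_iff.1 (Tuple.monotone_sort _)
    refine ⟨(σ, ⟨e ∘ σ, hanti.strictAnti_of_injective (e.injective.comp σ.injective)⟩), ?_⟩
    ext i
    simp [permStrictAntiToEmbedding]

theorem sum_perm_strictAntiSum (f : Fin n → α → ℝ≥0∞) :
    ∑ σ : Equiv.Perm (Fin n), strictAntiSum (f ∘ σ) = embSum f := by
  rw [← tsum_fintype (L := .unconditional _)]
  simp only [strictAntiSum]
  rw [← ENNReal.tsum_prod, embSum,
    ← (Equiv.ofBijective _ permStrictAntiToEmbedding_bijective).tsum_eq]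
  refine tsum_congr fun ⟨σ, m⟩ => ?_
  simpa [permStrictAntiToEmbedding] using Equiv.prod_comp σ fun i => f i (m.1 (σ.symm i))

end Sorting

section Stuffle

lemma prod_apply_update_mul (f : Fin n → α → ℝ≥0∞) (g : α → ℝ≥0∞) (m : Fin n → α)
    (j : Fin n) : ∏ i, update f j (f j * g) i (m i) = g (m j) * ∏ i, f i (m i) := by
  simp only [apply_update (fun i (h : α → ℝ≥0∞) => h (m i)),
    Finset.prod_update_of_mem (Finset.mem_univ j), Pi.mul_apply,
    ← Finset.mul_prod_erase Finset.univ (fun i => f i (m i)) (Finset.mem_univ j)]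
  rw [Finset.sdiff_singleton_eq_erase]
  ring

lemma tsum_mul_eq_tsum_notMem_range_add_sum (g : α → ℝ≥0∞) (m : Fin n ↪ α) (c : ℝ≥0∞) :
    (∑' k, g k) * c = ∑' k : {k // k ∉ Set.range m}, g k * c + ∑ j, g (m j) * c := by
  rw [← ENNReal.summable.tsum_add_tsum_compl (s := Set.range m) ENNReal.summable,
    tsum_range g m.injective, tsum_fintype, add_mul, ENNReal.tsum_mul_right, Finset.sum_mul,
    add_comm]
  rfl

theorem embSum_cons_add_sum_embSum_update (g : α → ℝ≥0∞) (f : Fin n → α → ℝ≥0∞) :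
    embSum (Fin.cons g f) + ∑ j, embSum (update f j (f j * g)) = (∑' k, g k) * embSum f := by
  have hcons : embSum (Fin.cons g f) =
      ∑' m : Fin n ↪ α, ∑' k : {k // k ∉ Set.range m}, g k * ∏ i, f i (m i) := by
    rw [embSum, ← (Equiv.embeddingFinSucc n α).symm.tsum_eq, ENNReal.tsum_sigma']
    simp [Fin.prod_univ_succ]
  have hupdate : ∑ j, embSum (update f j (f j * g)) =
      ∑' m : Fin n ↪ α, ∑ j, g (m j) * ∏ i, f i (m i) := by
    rw [Summable.tsum_finsetSum fun _ _ => ENNReal.summable]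
    simp only [embSum, prod_apply_update_mul]
  rw [hcons, hupdate, ← ENNReal.tsum_add, embSum, ← ENNReal.tsum_mul_left]
  exact tsum_congr fun m => (tsum_mul_eq_tsum_notMem_range_add_sum g m _).symm

lemma embSum_fin_zero (f : Fin 0 → α → ℝ≥0∞) : embSum f = 1 := by
  simp [embSum]

lemma embSum_singleton (g : α → ℝ≥0∞) : embSum ![g] = ∑' k, g k := by
  simpa [embSum_fin_zero] using embSum_cons_add_sum_embSum_update g ![]

lemma embSum_le_prod_tsum (f : Fin n → α → ℝ≥0∞) : embSum f ≤ ∏ i, ∑' k, f i k := by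
  induction n with
  | zero => simp [embSum_fin_zero]
  | succ n ih =>
    rw [← Fin.cons_self_tail f, Fin.prod_univ_succ]
    calc embSum (Fin.cons (f 0) (Fin.tail f))
        ≤ (∑' k, f 0 k) * embSum (Fin.tail f) :=
          (embSum_cons_add_sum_embSum_update _ _).symm ▸ le_self_add
      _ ≤ (∑' k, f 0 k) * ∏ i, ∑' k, Fin.tail f i k := by gcongr; exact ih _

end Stuffle

/-- `k ^ (-a)`, set to `0` at `k = 0` so that the positivity condition in `mzv` is built in. -/
noncomputable def invPow (a k : ℕ) : ℝ≥0∞ := if k = 0 then 0 else (k : ℝ≥0∞)⁻¹ ^ a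

lemma invPow_add (a b : ℕ) : invPow (a + b) = invPow a * invPow b := by
  ext k
  simp only [invPow, Pi.mul_apply]
  split_ifs <;> simp [pow_add]

lemma invPow_ne_top (a k : ℕ) : invPow a k ≠ ⊤ := by
  unfold invPow
  split_ifs with hk <;> simp [hk]

lemma invPow_eq_ofReal {a : ℕ} (ha : a ≠ 0) (k : ℕ) :
    invPow a k = ENNReal.ofReal ((k : ℝ) ^ a)⁻¹ := by
  unfold invPow
  split_ifs with hk
  · simp [hk, ha]
  · rw [ENNReal.ofReal_inv_of_pos (by positivity), ENNReal.ofReal_pow (by positivity),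
      ENNReal.ofReal_natCast, ENNReal.inv_pow]

lemma tsum_invPow_ne_top {a : ℕ} (ha : 2 ≤ a) : ∑' k, invPow a k ≠ ⊤ := by
  simp_rw [invPow_eq_ofReal (by omega : a ≠ 0)]
  rw [← ENNReal.ofReal_tsum_of_nonneg (fun _ => by positivity) (Real.summable_nat_pow_inv.2 ha)]
  exact ENNReal.ofReal_ne_top

lemma mzv_eq_toReal_strictAntiSum (l : Fin n → ℕ) :
    mzv l = (strictAntiSum (invPow ∘ l)).toReal := by
  have hfin (m : {m : Fin n → ℕ // StrictAnti m}) : ∏ i, (invPow ∘ l) i (m.1 i) ≠ ⊤ :=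
    ENNReal.prod_ne_top fun _ _ => invPow_ne_top _ _
  rw [strictAntiSum, ENNReal.tsum_toReal_eq hfin, mzv]
  refine ((tsum_subtype {m | StrictAnti m} fun m => (∏ i, (invPow ∘ l) i (m i)).toReal).trans
    (tsum_congr fun m => ?_)).symm
  by_cases hm : StrictAnti m
  swap
  · simp [hm]
  rw [Set.indicator_of_mem (show m ∈ {m | StrictAnti m} from hm), ENNReal.toReal_prod]
  by_cases hpos : ∀ i, 1 ≤ m i
  · rw [if_pos ⟨hm, hpos⟩]
    refine Finset.prod_congr rfl fun i _ => ?_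
    simp [invPow, Nat.one_le_iff_ne_zero.1 (hpos i)]
  · obtain ⟨i, hi⟩ := not_forall.1 hpos
    rw [if_neg fun h => hpos h.2]
    exact Finset.prod_eq_zero (Finset.mem_univ i)
      (by simp [invPow, Nat.lt_one_iff.1 (not_le.1 hi)])

lemma mzv_singleton (a : ℕ) : mzv ![a] = (∑' k, invPow a k).toReal := by
  have : invPow ∘ ![a] = ![invPow a] := funext fun i => by fin_cases i; rfl
  rw [mzv_eq_toReal_strictAntiSum, this, ← embSum_singleton, ← sum_perm_strictAntiSum]
  simp

noncomputable def distinctZeta (l : Fin n → ℕ) : ℝ := (embSum (invPow ∘ l)).toReal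

lemma embSum_invPow_ne_top {l : Fin n → ℕ} (hl : ∀ i, 2 ≤ l i) : embSum (invPow ∘ l) ≠ ⊤ :=
  ne_top_of_le_ne_top (ENNReal.prod_ne_top fun i _ => tsum_invPow_ne_top (hl i))
    (embSum_le_prod_tsum _)

theorem sum_perm_mzv {l : Fin n → ℕ} (hl : ∀ i, 2 ≤ l i) :
    ∑ σ : Equiv.Perm (Fin n), mzv (l ∘ σ) = distinctZeta l := by
  have hfin := embSum_invPow_ne_top hl
  rw [← sum_perm_strictAntiSum] at hfin
  simp only [distinctZeta, mzv_eq_toReal_strictAntiSum, ← sum_perm_strictAntiSum]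
  rw [ENNReal.toReal_sum fun σ _ => ENNReal.sum_ne_top.1 hfin σ (Finset.mem_univ σ)]
  rfl

lemma distinctZeta_nil : distinctZeta ![] = 1 := by
  simp [distinctZeta, embSum_fin_zero]

theorem distinctZeta_cons {a : ℕ} {l : Fin n → ℕ} (ha : 2 ≤ a) (hl : ∀ i, 2 ≤ l i) :
    distinctZeta (Matrix.vecCons a l) =
      mzv ![a] * distinctZeta l - ∑ j, distinctZeta (update l j (l j + a)) := by
  have key := embSum_cons_add_sum_embSum_update (invPow a) (invPow ∘ l)
  have hupdate (j : Fin n) : invPow ∘ update l j (l j + a) =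
      update (invPow ∘ l) j ((invPow ∘ l) j * invPow a) := by
    rw [comp_update, comp_apply, invPow_add]
  simp only [← hupdate, ← Fin.comp_cons] at key
  have hfin : (∑' k, invPow a k) * embSum (invPow ∘ l) ≠ ⊤ :=
    ENNReal.mul_ne_top (tsum_invPow_ne_top ha) (embSum_invPow_ne_top hl)
  rw [← key, ENNReal.add_ne_top] at hfin
  rw [eq_sub_iff_add_eq, distinctZeta, mzv_singleton, distinctZeta, ← ENNReal.toReal_mul, ← key,
    ENNReal.toReal_add hfin.1 hfin.2, ENNReal.toReal_sum (ENNReal.sum_ne_top.1 hfin.2)]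
  rfl

end MultipleZeta

open MultipleZeta

theorem hoffman_symmetric_sum_depth_four (l1 l2 l3 l4 : ℕ)
    (h1 : 2 ≤ l1) (h2 : 2 ≤ l2) (h3 : 2 ≤ l3) (h4 : 2 ≤ l4) :
    ∑ σ : Equiv.Perm (Fin 4), mzv (![l1, l2, l3, l4] ∘ σ) =
      mzv ![l1] * mzv ![l2] * mzv ![l3] * mzv ![l4]
        - (mzv ![l1 + l2] * mzv ![l3] * mzv ![l4]
            + mzv ![l1 + l3] * mzv ![l2] * mzv ![l4]
            + mzv ![l1 + l4] * mzv ![l2] * mzv ![l3]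
            + mzv ![l2 + l3] * mzv ![l1] * mzv ![l4]
            + mzv ![l2 + l4] * mzv ![l1] * mzv ![l3]
            + mzv ![l3 + l4] * mzv ![l1] * mzv ![l2])
        + (mzv ![l1 + l2] * mzv ![l3 + l4] + mzv ![l1 + l3] * mzv ![l2 + l4]
            + mzv ![l1 + l4] * mzv ![l2 + l3])
        + 2 * (mzv ![l1 + l2 + l3] * mzv ![l4] + mzv ![l1 + l2 + l4] * mzv ![l3]
            + mzv ![l1 + l3 + l4] * mzv ![l2] + mzv ![l2 + l3 + l4] * mzv ![l1])
        - 6 * mzv ![l1 + l2 + l3 + l4] := by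
  rw [sum_perm_mzv (by simp [Fin.forall_fin_succ, *])]
  -- `↓` expands each finite sum before simp rewrites inside it, so that the side conditions of
  -- `distinctZeta_cons` never mention a bound index
  simp (disch := (try simp [Fin.forall_fin_succ]) <;> omega) only [distinctZeta_cons,
    distinctZeta_nil, ↓Fin.sum_univ_succ, Fin.sum_univ_zero, Matrix.update_vecCons_zero,
    Matrix.update_vecCons_succ, Matrix.cons_val_zero, Matrix.cons_val_succ]
  ring_nf
end

section
/- Let l1, l3 be integers with l1 ≥ 2 and l3 ≥ 2, and let l2 be a positive integer. Then ζ(l1,l2)·ζ(l3) = ζ(l1,l2,l3) + ζ(l1,l3,l2) + ζ(l3,l1,l2) + ζ(l1+l3,l2) + ζ(l1,l2+l3). (First identity of Proposition 2 (harmonic relations in depth 3) of the paper, restricted to convergent indices.) -/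
open scoped ENNReal NNReal

theorem ENNReal.tsum_pi_fin_succ {α : Type*} {n : ℕ} (f : (Fin (n + 1) → α) → ℝ≥0∞) :
    ∑' m, f m = ∑' (a) (m), f (Fin.cons a m) := by
  rw [← (Fin.consEquiv fun _ => α).tsum_eq, ENNReal.tsum_prod']
  rfl

theorem ENNReal.sq_mul_le_rpow_three_halves_mul {x y : ℝ≥0∞} (hxy : x ≤ y) :
    x ^ 2 * y ≤ x ^ (3 / 2 : ℝ) * y ^ (3 / 2 : ℝ) := by
  have hsplit (z : ℝ≥0∞) : z ^ (3 / 2 : ℝ) = z ^ (1 / 2 : ℝ) * z := by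
    rw [show (3 / 2 : ℝ) = 1 / 2 + 1 by norm_num,
      ENNReal.rpow_add_of_nonneg _ _ (by norm_num) zero_le_one, ENNReal.rpow_one]
  calc x ^ 2 * y = x ^ (3 / 2 : ℝ) * (x ^ (1 / 2 : ℝ) * y) := by
        rw [← mul_assoc, ← ENNReal.rpow_add_of_nonneg _ _ (by norm_num) (by norm_num)]
        norm_num
    _ ≤ x ^ (3 / 2 : ℝ) * (y ^ (1 / 2 : ℝ) * y) := by gcongr
    _ = x ^ (3 / 2 : ℝ) * y ^ (3 / 2 : ℝ) := by rw [hsplit y]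

theorem ENNReal.tsum_ite_natCast_inv_rpow_ne_top {p : ℝ} (hp : 1 < p) :
    ∑' a : ℕ, (if 1 ≤ a then (a : ℝ≥0∞)⁻¹ ^ p else 0) ≠ ∞ := by
  have hcoe (a : ℕ) : (if 1 ≤ a then (a : ℝ≥0∞)⁻¹ ^ p else 0) = (((a : ℝ≥0) ^ p)⁻¹ : ℝ≥0) := by
    split_ifs with ha
    · have ha0 : (a : ℝ≥0) ≠ 0 := by positivity
      rw [ENNReal.coe_inv (by positivity), ENNReal.coe_rpow_of_ne_zero ha0, ENNReal.inv_rpow]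
      rfl
    · -- in `ℝ≥0`, `0⁻¹ = 0`
      simp [show a = 0 by omega, (zero_lt_one.trans hp).ne']
  simpa only [hcoe] using ENNReal.tsum_coe_ne_top_iff_summable.2 (NNReal.summable_rpow_inv.2 hp)

theorem ite_mul_ite_eq_sum_positions {R : Type*} [NonAssocSemiring R] (a b c : ℕ) (x y : R) :
    (if b < a ∧ 1 ≤ b then x else 0) * (if 1 ≤ c then y else 0) =
      (if c < b ∧ b < a ∧ 1 ≤ c then x * y else 0) + (if b < c ∧ c < a ∧ 1 ≤ b then x * y else 0)
        + (if b < a ∧ a < c ∧ 1 ≤ b then x * y else 0)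
        + (if c = a ∧ b < a ∧ 1 ≤ b then x * y else 0)
        + (if c = b ∧ b < a ∧ 1 ≤ b then x * y else 0) := by
  split_ifs <;> first | omega | simp

open Classical in
noncomputable def emzv {n : ℕ} (l : Fin n → ℕ) : ℝ≥0∞ :=
  ∑' m : Fin n → ℕ, if StrictAnti m ∧ ∀ i, 1 ≤ m i then ∏ i, (m i : ℝ≥0∞)⁻¹ ^ l i else 0

theorem mzv_eq_toReal_emzv {n : ℕ} (l : Fin n → ℕ) : mzv l = (emzv l).toReal := by
  rw [emzv, ENNReal.tsum_toReal_eq]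
  · refine tsum_congr fun m => ?_
    split_ifs <;> simp
  · intro m
    split_ifs with hm
    · exact ENNReal.prod_ne_top fun i _ => ENNReal.pow_ne_top <| ENNReal.inv_ne_top.2 <|
        Nat.cast_ne_zero.2 (Nat.one_le_iff_ne_zero.1 (hm.2 i))
    · exact ENNReal.zero_ne_top

theorem emzv_one (k : ℕ) : emzv ![k] = ∑' a : ℕ, if 1 ≤ a then (a : ℝ≥0∞)⁻¹ ^ k else 0 := by
  simp [emzv, ENNReal.tsum_pi_fin_succ, Fin.forall_fin_succ, Subsingleton.strictAnti]

theorem emzv_two (k₁ k₂ : ℕ) :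
    emzv ![k₁, k₂] = ∑' (a) (b : ℕ),
      if b < a ∧ 1 ≤ b then (a : ℝ≥0∞)⁻¹ ^ k₁ * (b : ℝ≥0∞)⁻¹ ^ k₂ else 0 := by
  simp only [emzv, ENNReal.tsum_pi_fin_succ, tsum_fintype, Fintype.sum_unique,
    Fin.strictAnti_iff_succ_lt, Fin.forall_fin_succ, Fin.prod_univ_succ, Fin.cons_zero,
    Fin.cons_succ, Fin.castSucc_zero, ← Fin.succ_castSucc, IsEmpty.forall_iff,
    and_true]
  exact tsum_congr fun a => tsum_congr fun b => if_congr (by omega) (by simp) rfl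

theorem emzv_three (k₁ k₂ k₃ : ℕ) :
    emzv ![k₁, k₂, k₃] = ∑' (a) (b) (c : ℕ), if c < b ∧ b < a ∧ 1 ≤ c then
      (a : ℝ≥0∞)⁻¹ ^ k₁ * (b : ℝ≥0∞)⁻¹ ^ k₂ * (c : ℝ≥0∞)⁻¹ ^ k₃ else 0 := by
  simp only [emzv, ENNReal.tsum_pi_fin_succ, tsum_fintype, Fintype.sum_unique,
    Fin.strictAnti_iff_succ_lt, Fin.forall_fin_succ, Fin.prod_univ_succ, Fin.cons_zero,
    Fin.cons_succ, Fin.castSucc_zero, ← Fin.succ_castSucc, IsEmpty.forall_iff,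
    and_true]
  exact tsum_congr fun a => tsum_congr fun b => tsum_congr fun c =>
    if_congr (by omega) (by simp [mul_assoc]) rfl

theorem emzv_one_ne_top {k : ℕ} (hk : 1 < k) : emzv ![k] ≠ ∞ := by
  refine ne_top_of_le_ne_top
    (ENNReal.tsum_ite_natCast_inv_rpow_ne_top (Nat.one_lt_cast.2 hk)) ?_
  rw [emzv_one]
  gcongr with a
  split_ifs
  · rw [ENNReal.rpow_natCast]
  · rfl

theorem emzv_two_ne_top {k₁ k₂ : ℕ} (h₁ : 2 ≤ k₁) (h₂ : 1 ≤ k₂) : emzv ![k₁, k₂] ≠ ∞ := by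
  have hp : (1 : ℝ) < 3 / 2 := by norm_num
  refine ne_top_of_le_ne_top (ENNReal.mul_ne_top (ENNReal.tsum_ite_natCast_inv_rpow_ne_top hp)
    (ENNReal.tsum_ite_natCast_inv_rpow_ne_top hp)) ?_
  rw [emzv_two, ← ENNReal.tsum_mul_right]
  gcongr with a
  rw [← ENNReal.tsum_mul_left]
  gcongr with b
  by_cases hab : b < a ∧ 1 ≤ b
  · obtain ⟨hba, hb⟩ := hab
    have ha : 1 ≤ a := hb.trans hba.le
    have hinv {n : ℕ} (hn : 1 ≤ n) : (n : ℝ≥0∞)⁻¹ ≤ 1 := ENNReal.inv_le_one.2 (Nat.one_le_cast.2 hn)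
    rw [if_pos ⟨hba, hb⟩, if_pos ha, if_pos hb]
    calc (a : ℝ≥0∞)⁻¹ ^ k₁ * (b : ℝ≥0∞)⁻¹ ^ k₂ ≤ (a : ℝ≥0∞)⁻¹ ^ 2 * (b : ℝ≥0∞)⁻¹ :=
          mul_le_mul' (pow_le_pow_right_of_le_one' (hinv ha) h₁)
            (pow_le_pow_right_of_le_one' (hinv hb) h₂ |>.trans_eq (pow_one _))
      _ ≤ _ := ENNReal.sq_mul_le_rpow_three_halves_mul (by gcongr)
  · rw [if_neg hab]
    exact zero_le

theorem emzv_two_mul_emzv_one (l₁ l₂ l₃ : ℕ) :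
    emzv ![l₁, l₂] * emzv ![l₃] =
      emzv ![l₁, l₂, l₃] + emzv ![l₁, l₃, l₂] + emzv ![l₃, l₁, l₂]
        + emzv ![l₁ + l₃, l₂] + emzv ![l₁, l₂ + l₃] := by
  have hc_between : emzv ![l₁, l₃, l₂] = ∑' (a) (b) (c : ℕ), if b < c ∧ c < a ∧ 1 ≤ b then
      (a : ℝ≥0∞)⁻¹ ^ l₁ * (b : ℝ≥0∞)⁻¹ ^ l₂ * (c : ℝ≥0∞)⁻¹ ^ l₃ else 0 := by
    rw [emzv_three]
    refine tsum_congr fun a => ENNReal.tsum_comm.trans (tsum_congr₂ fun b c => ?_)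
    rw [mul_right_comm]
  have hc_above : emzv ![l₃, l₁, l₂] = ∑' (a) (b) (c : ℕ), if b < a ∧ a < c ∧ 1 ≤ b then
      (a : ℝ≥0∞)⁻¹ ^ l₁ * (b : ℝ≥0∞)⁻¹ ^ l₂ * (c : ℝ≥0∞)⁻¹ ^ l₃ else 0 := by
    rw [emzv_three, ENNReal.tsum_comm]
    refine tsum_congr fun a => ENNReal.tsum_comm.trans (tsum_congr₂ fun b c => ?_)
    congr 1
    ring
  have hc_eq_a : emzv ![l₁ + l₃, l₂] = ∑' (a) (b) (c : ℕ), if c = a ∧ b < a ∧ 1 ≤ b then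
      (a : ℝ≥0∞)⁻¹ ^ l₁ * (b : ℝ≥0∞)⁻¹ ^ l₂ * (c : ℝ≥0∞)⁻¹ ^ l₃ else 0 := by
    rw [emzv_two]
    refine tsum_congr₂ fun a b => ?_
    simp_rw [ite_and, tsum_ite_eq]
    rw [pow_add, mul_right_comm]
  have hc_eq_b : emzv ![l₁, l₂ + l₃] = ∑' (a) (b) (c : ℕ), if c = b ∧ b < a ∧ 1 ≤ b then
      (a : ℝ≥0∞)⁻¹ ^ l₁ * (b : ℝ≥0∞)⁻¹ ^ l₂ * (c : ℝ≥0∞)⁻¹ ^ l₃ else 0 := by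
    rw [emzv_two]
    refine tsum_congr₂ fun a b => ?_
    simp_rw [ite_and, tsum_ite_eq]
    rw [pow_add, mul_assoc]
  rw [hc_between, hc_above, hc_eq_a, hc_eq_b, emzv_three, emzv_two, emzv_one,
    ← ENNReal.tsum_mul_right]
  simp_rw [← ENNReal.tsum_mul_right, ← ENNReal.tsum_mul_left, ite_mul_ite_eq_sum_positions,
    ENNReal.tsum_add]

theorem harmonic_relation_depth_three_first (l1 l2 l3 : ℕ)
    (h1 : 2 ≤ l1) (h2 : 1 ≤ l2) (h3 : 2 ≤ l3) :
    mzv ![l1, l2] * mzv ![l3] =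
      mzv ![l1, l2, l3] + mzv ![l1, l3, l2] + mzv ![l3, l1, l2]
        + mzv ![l1 + l3, l2] + mzv ![l1, l2 + l3] := by
  have hfin := emzv_two_mul_emzv_one l1 l2 l3 ▸
    ENNReal.mul_ne_top (emzv_two_ne_top h1 h2) (emzv_one_ne_top h3)
  simp only [ENNReal.add_ne_top] at hfin
  simp only [mzv_eq_toReal_emzv, ← ENNReal.toReal_mul, emzv_two_mul_emzv_one]
  simp [ENNReal.toReal_add, hfin]
end

section
/- Let l1, l2, l3 be integers, each at least 2. Then ζ(l1)·ζ(l2)·ζ(l3) = Σ_{σ ∈ S3} ζ(l_{σ(1)}, l_{σ(2)}, l_{σ(3)}) + ζ(l1+l2,l3) + ζ(l1+l3,l2) + ζ(l2+l3,l1) + ζ(l1,l2+l3) + ζ(l2,l1+l3) + ζ(l3,l1+l2) + ζ(l1+l2+l3), where the first sum runs over all six permutations σ of {1,2,3}. (Second identity of Proposition 2 (harmonic relations in depth 3) of the paper, restricted to convergent indices.) -/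
noncomputable def z1 (k : ℕ) (m : ℕ) : ℝ := if 1 ≤ m then 1 / (m : ℝ) ^ k else 0

lemma z1_nonneg (k m : ℕ) : 0 ≤ z1 k m := by
  unfold z1; split <;> positivity

lemma z1_eq {k : ℕ} (hk : 1 ≤ k) : z1 k = fun m : ℕ => 1 / (m : ℝ) ^ k := by
  funext m
  unfold z1
  split
  · rfl
  · have : m = 0 := by omega
    subst this
    simp [zero_pow (by omega : k ≠ 0)]

lemma summable_z1 {k : ℕ} (hk : 2 ≤ k) : Summable (z1 k) := by
  rw [z1_eq (by omega)]
  exact Real.summable_one_div_nat_pow.2 (by omega)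

lemma z1_mul_z1 (a b m : ℕ) : z1 a m * z1 b m = z1 (a + b) m := by
  unfold z1
  split
  · rw [pow_add, div_mul_div_comm, one_mul]
  · simp

def e1 : ℕ ≃ (Fin 1 → ℕ) where
  toFun n := ![n]
  invFun f := f 0
  left_inv n := rfl
  right_inv f := by funext i; fin_cases i <;> rfl

def e2 : ℕ × ℕ ≃ (Fin 2 → ℕ) where
  toFun p := ![p.1, p.2]
  invFun f := (f 0, f 1)
  left_inv p := rfl
  right_inv f := by funext i; fin_cases i <;> rfl

def e3 : ℕ × ℕ × ℕ ≃ (Fin 3 → ℕ) where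
  toFun p := ![p.1, p.2.1, p.2.2]
  invFun f := (f 0, f 1, f 2)
  left_inv p := rfl
  right_inv f := by funext i; fin_cases i <;> rfl

lemma strictAnti_two {x y : ℕ} : StrictAnti ![x, y] ↔ y < x := by
  rw [Fin.strictAnti_iff_succ_lt]
  constructor
  · intro h; exact h 0
  · intro h i; fin_cases i; exact h

lemma strictAnti_three {x y z : ℕ} : StrictAnti ![x, y, z] ↔ z < y ∧ y < x := by
  rw [Fin.strictAnti_iff_succ_lt]
  constructor
  · intro h; exact ⟨h 1, h 0⟩
  · rintro ⟨h1, h2⟩ i; fin_cases i <;> assumption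

lemma mzv_single (k : ℕ) : mzv ![k] = ∑' m : ℕ, z1 k m := by
  unfold mzv
  rw [← e1.tsum_eq]
  refine tsum_congr fun n => ?_
  have h : StrictAnti (e1 n) := Subsingleton.strictAnti _
  by_cases hn : 1 ≤ n
  · rw [if_pos ⟨h, fun i => by fin_cases i; exact hn⟩]
    simp [show e1 n = ![n] from rfl, z1, hn]
  · rw [if_neg (by simp [show e1 n = ![n] from rfl, hn]), z1, if_neg hn]

lemma mzv_double (a b : ℕ) :
    mzv ![a, b] = ∑' p : ℕ × ℕ, if p.2 < p.1 then z1 a p.1 * z1 b p.2 else 0 := by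
  unfold mzv
  rw [← e2.tsum_eq]
  refine tsum_congr fun p => ?_
  have hc : StrictAnti (e2 p) ↔ p.2 < p.1 := strictAnti_two
  have hf : (∀ i, 1 ≤ e2 p i) ↔ 1 ≤ p.1 ∧ 1 ≤ p.2 := by
    constructor
    · intro h; exact ⟨h 0, h 1⟩
    · rintro ⟨h1, h2⟩ i; fin_cases i <;> assumption
  rw [if_congr (and_congr hc hf) rfl rfl]
  simp only [Fin.prod_univ_two, show e2 p = ![p.1, p.2] from rfl, Equiv.coe_fn_mk, Matrix.cons_val_zero, Matrix.cons_val_one,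
    Matrix.head_cons]
  unfold z1
  split_ifs <;> first | ring1 | (exfalso; omega)

lemma mzv_triple (a b c : ℕ) :
    mzv ![a, b, c] = ∑' p : ℕ × ℕ × ℕ,
      if p.2.2 < p.2.1 ∧ p.2.1 < p.1 then z1 a p.1 * z1 b p.2.1 * z1 c p.2.2 else 0 := by
  unfold mzv
  rw [← e3.tsum_eq]
  refine tsum_congr fun p => ?_
  have hc : StrictAnti (e3 p) ↔ p.2.2 < p.2.1 ∧ p.2.1 < p.1 := strictAnti_three
  have hf : (∀ i, 1 ≤ e3 p i) ↔ 1 ≤ p.1 ∧ 1 ≤ p.2.1 ∧ 1 ≤ p.2.2 := by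
    constructor
    · intro h; exact ⟨h 0, h 1, h 2⟩
    · rintro ⟨h1, h2, h3⟩ i; fin_cases i <;> assumption
  rw [if_congr (and_congr hc hf) rfl rfl]
  simp only [Fin.prod_univ_three, show e3 p = ![p.1, p.2.1, p.2.2] from rfl, Equiv.coe_fn_mk, Matrix.cons_val_zero, Matrix.cons_val_one,
    Matrix.head_cons, Matrix.cons_val_two, Matrix.tail_cons]
  unfold z1
  split_ifs <;> first | ring1 | (exfalso; omega)

lemma tsum_of_inj {β γ : Type*} (f : β → ℝ) (g : γ → ℝ) (j : γ → β)
    (hj : Function.Injective j) (hsupp : ∀ p, f p ≠ 0 → ∃ q, j q = p)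
    (hcomp : ∀ q, f (j q) = g q) : ∑' p, f p = ∑' q, g q := by
  apply tsum_eq_tsum_of_ne_zero_bij (fun x => j x.1)
  · intro x y hxy
    exact Subtype.ext (hj hxy)
  · intro p hp
    obtain ⟨q, rfl⟩ := hsupp p hp
    refine ⟨⟨q, ?_⟩, rfl⟩
    rw [Function.mem_support] at hp ⊢
    rwa [hcomp] at hp
  · exact fun x => hcomp x.1

/-- Classification of triples into the 13 stuffle regions. -/
def tau (p : ℕ × ℕ × ℕ) : ℕ :=
  if p.1 = p.2.1 then
    (if p.2.1 = p.2.2 then 12 else if p.2.2 < p.2.1 then 6 else 11)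
  else if p.1 < p.2.1 then
    (if p.1 = p.2.2 then 10
     else if p.2.1 = p.2.2 then 8
     else if p.2.2 < p.1 then 2 else if p.2.2 < p.2.1 then 3 else 5)
  else
    (if p.1 = p.2.2 then 7
     else if p.2.1 = p.2.2 then 9
     else if p.2.2 < p.2.1 then 0 else if p.2.2 < p.1 then 1 else 4)

lemma tau_lt (p : ℕ × ℕ × ℕ) : tau p < 13 := by
  unfold tau; split_ifs <;> omega

section tauE
variable (p : ℕ × ℕ × ℕ)

lemma tauE0 : tau p = 0 ↔ p.2.2 < p.2.1 ∧ p.2.1 < p.1 := by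
  unfold tau; split_ifs <;> (try simp only [false_iff, iff_false, true_iff, iff_true]) <;> omega
lemma tauE1 : tau p = 1 ↔ p.2.1 < p.2.2 ∧ p.2.2 < p.1 := by
  unfold tau; split_ifs <;> (try simp only [false_iff, iff_false, true_iff, iff_true]) <;> omega
lemma tauE2 : tau p = 2 ↔ p.2.2 < p.1 ∧ p.1 < p.2.1 := by
  unfold tau; split_ifs <;> (try simp only [false_iff, iff_false, true_iff, iff_true]) <;> omega
lemma tauE3 : tau p = 3 ↔ p.1 < p.2.2 ∧ p.2.2 < p.2.1 := by
  unfold tau; split_ifs <;> (try simp only [false_iff, iff_false, true_iff, iff_true]) <;> omega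
lemma tauE4 : tau p = 4 ↔ p.2.1 < p.1 ∧ p.1 < p.2.2 := by
  unfold tau; split_ifs <;> (try simp only [false_iff, iff_false, true_iff, iff_true]) <;> omega
lemma tauE5 : tau p = 5 ↔ p.1 < p.2.1 ∧ p.2.1 < p.2.2 := by
  unfold tau; split_ifs <;> (try simp only [false_iff, iff_false, true_iff, iff_true]) <;> omega
lemma tauE6 : tau p = 6 ↔ p.1 = p.2.1 ∧ p.2.2 < p.1 := by
  unfold tau; split_ifs <;> (try simp only [false_iff, iff_false, true_iff, iff_true]) <;> omega
lemma tauE7 : tau p = 7 ↔ p.1 = p.2.2 ∧ p.2.1 < p.1 := by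
  unfold tau; split_ifs <;> (try simp only [false_iff, iff_false, true_iff, iff_true]) <;> omega
lemma tauE8 : tau p = 8 ↔ p.2.1 = p.2.2 ∧ p.1 < p.2.1 := by
  unfold tau; split_ifs <;> (try simp only [false_iff, iff_false, true_iff, iff_true]) <;> omega
lemma tauE9 : tau p = 9 ↔ p.2.1 = p.2.2 ∧ p.2.1 < p.1 := by
  unfold tau; split_ifs <;> (try simp only [false_iff, iff_false, true_iff, iff_true]) <;> omega
lemma tauE10 : tau p = 10 ↔ p.1 = p.2.2 ∧ p.1 < p.2.1 := by
  unfold tau; split_ifs <;> (try simp only [false_iff, iff_false, true_iff, iff_true]) <;> omega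
lemma tauE11 : tau p = 11 ↔ p.1 = p.2.1 ∧ p.1 < p.2.2 := by
  unfold tau; split_ifs <;> (try simp only [false_iff, iff_false, true_iff, iff_true]) <;> omega
lemma tauE12 : tau p = 12 ↔ p.1 = p.2.1 ∧ p.2.1 = p.2.2 := by
  unfold tau; split_ifs <;> (try simp only [false_iff, iff_false, true_iff, iff_true]) <;> omega

end tauE

noncomputable def FF (l1 l2 l3 : ℕ) (p : ℕ × ℕ × ℕ) : ℝ :=
  z1 l1 p.1 * z1 l2 p.2.1 * z1 l3 p.2.2

lemma FF_nonneg (l1 l2 l3 : ℕ) (p : ℕ × ℕ × ℕ) : 0 ≤ FF l1 l2 l3 p :=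
  mul_nonneg (mul_nonneg (z1_nonneg _ _) (z1_nonneg _ _)) (z1_nonneg _ _)

lemma norm_summable_z1 {k : ℕ} (hk : 2 ≤ k) : Summable fun m => ‖z1 k m‖ := by
  have h := summable_z1 hk
  exact h.congr fun m => (Real.norm_of_nonneg (z1_nonneg k m)).symm

lemma summable_pair {l1 l2 : ℕ} (h1 : 2 ≤ l1) (h2 : 2 ≤ l2) :
    Summable (fun q : ℕ × ℕ => z1 l1 q.1 * z1 l2 q.2) :=
  summable_mul_of_summable_norm (norm_summable_z1 h1) (norm_summable_z1 h2)

set_option maxHeartbeats 1600000 in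
lemma summable_trip {l1 l2 l3 : ℕ} (h1 : 2 ≤ l1) (h2 : 2 ≤ l2) (h3 : 2 ≤ l3) :
    Summable (fun q : (ℕ × ℕ) × ℕ => z1 l1 q.1.1 * z1 l2 q.1.2 * z1 l3 q.2) := by
  have hp := summable_pair h1 h2
  have n12 : Summable fun q : ℕ × ℕ => ‖z1 l1 q.1 * z1 l2 q.2‖ :=
    hp.congr fun q => (Real.norm_of_nonneg
      (mul_nonneg (z1_nonneg _ _) (z1_nonneg _ _))).symm
  exact summable_mul_of_summable_norm n12 (norm_summable_z1 h3)

set_option maxHeartbeats 1600000 in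
lemma summable_FF {l1 l2 l3 : ℕ} (h1 : 2 ≤ l1) (h2 : 2 ≤ l2) (h3 : 2 ≤ l3) :
    Summable (FF l1 l2 l3) :=
  ((Equiv.prodAssoc ℕ ℕ ℕ).symm.summable_iff).mpr (summable_trip h1 h2 h3)

set_option maxHeartbeats 1600000 in
lemma prod_eq_tsum_FF {l1 l2 l3 : ℕ} (h1 : 2 ≤ l1) (h2 : 2 ≤ l2) (h3 : 2 ≤ l3) :
    mzv ![l1] * mzv ![l2] * mzv ![l3] = ∑' p : ℕ × ℕ × ℕ, FF l1 l2 l3 p := by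
  rw [mzv_single, mzv_single, mzv_single]
  rw [Summable.tsum_mul_tsum (summable_z1 h1) (summable_z1 h2) (summable_pair h1 h2)]
  rw [Summable.tsum_mul_tsum (summable_pair h1 h2) (summable_z1 h3) (summable_trip h1 h2 h3)]
  exact ((Equiv.prodAssoc ℕ ℕ ℕ).symm.tsum_eq
    (fun q : (ℕ × ℕ) × ℕ => z1 l1 q.1.1 * z1 l2 q.1.2 * z1 l3 q.2)).symm

set_option maxHeartbeats 1600000 in
lemma summable_piece {l1 l2 l3 : ℕ} (h1 : 2 ≤ l1) (h2 : 2 ≤ l2) (h3 : 2 ≤ l3) (i : ℕ) :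
    Summable (fun p => if tau p = i then FF l1 l2 l3 p else 0) := by
  refine Summable.of_nonneg_of_le (fun p => ?_) (fun p => ?_) (summable_FF h1 h2 h3)
  · split
    · exact FF_nonneg l1 l2 l3 p
    · exact le_refl 0
  · split
    · exact le_refl _
    · exact FF_nonneg l1 l2 l3 p

set_option maxHeartbeats 1600000 in
lemma tsum_FF_split {l1 l2 l3 : ℕ} (h1 : 2 ≤ l1) (h2 : 2 ≤ l2) (h3 : 2 ≤ l3) :
    ∑' p : ℕ × ℕ × ℕ, FF l1 l2 l3 p =
      ∑ i ∈ Finset.range 13, ∑' p : ℕ × ℕ × ℕ, (if tau p = i then FF l1 l2 l3 p else 0) := by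
  rw [← Summable.tsum_finsetSum (fun i _ => summable_piece h1 h2 h3 i)]
  refine tsum_congr fun p => ?_
  rw [Finset.sum_ite_eq (Finset.range 13) (tau p) (fun _ => FF l1 l2 l3 p)]
  simp [Finset.mem_range, tau_lt p]

section regions

variable (l1 l2 l3 : ℕ)

lemma T0 : ∑' p : ℕ × ℕ × ℕ, (if tau p = 0 then FF l1 l2 l3 p else 0) = mzv ![l1, l2, l3] := by
  rw [mzv_triple]
  refine tsum_of_inj _ _ (fun q : ℕ × ℕ × ℕ => q) ?_ ?_ ?_
  · exact fun q q' h => h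
  · exact fun p _ => ⟨p, rfl⟩
  · intro q
    obtain ⟨x, y, z⟩ := q
    dsimp only [FF]
    rw [if_congr (tauE0 _) rfl rfl]

lemma T1 : ∑' p : ℕ × ℕ × ℕ, (if tau p = 1 then FF l1 l2 l3 p else 0) = mzv ![l1, l3, l2] := by
  rw [mzv_triple]
  refine tsum_of_inj _ _ (fun q : ℕ × ℕ × ℕ => (q.1, q.2.2, q.2.1)) ?_ ?_ ?_
  · intro q q' h
    simp only [Prod.mk.injEq] at h
    simp only [Prod.ext_iff]
    omega
  · exact fun p _ => ⟨(p.1, p.2.2, p.2.1), rfl⟩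
  · intro q
    obtain ⟨x, y, z⟩ := q
    dsimp only [FF]
    rw [if_congr (tauE1 _) rfl rfl]
    dsimp only
    split_ifs <;> first | ring1 | rfl | (exfalso; omega)

lemma T2 : ∑' p : ℕ × ℕ × ℕ, (if tau p = 2 then FF l1 l2 l3 p else 0) = mzv ![l2, l1, l3] := by
  rw [mzv_triple]
  refine tsum_of_inj _ _ (fun q : ℕ × ℕ × ℕ => (q.2.1, q.1, q.2.2)) ?_ ?_ ?_
  · intro q q' h
    simp only [Prod.mk.injEq] at h
    simp only [Prod.ext_iff]
    omega
  · exact fun p _ => ⟨(p.2.1, p.1, p.2.2), rfl⟩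
  · intro q
    obtain ⟨x, y, z⟩ := q
    dsimp only [FF]
    rw [if_congr (tauE2 _) rfl rfl]
    dsimp only
    split_ifs <;> first | ring1 | rfl | (exfalso; omega)

lemma T3 : ∑' p : ℕ × ℕ × ℕ, (if tau p = 3 then FF l1 l2 l3 p else 0) = mzv ![l2, l3, l1] := by
  rw [mzv_triple]
  refine tsum_of_inj _ _ (fun q : ℕ × ℕ × ℕ => (q.2.2, q.1, q.2.1)) ?_ ?_ ?_
  · intro q q' h
    simp only [Prod.mk.injEq] at h
    simp only [Prod.ext_iff]
    omega
  · exact fun p _ => ⟨(p.2.1, p.2.2, p.1), rfl⟩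
  · intro q
    obtain ⟨x, y, z⟩ := q
    dsimp only [FF]
    rw [if_congr (tauE3 _) rfl rfl]
    dsimp only
    split_ifs <;> first | ring1 | rfl | (exfalso; omega)

lemma T4 : ∑' p : ℕ × ℕ × ℕ, (if tau p = 4 then FF l1 l2 l3 p else 0) = mzv ![l3, l1, l2] := by
  rw [mzv_triple]
  refine tsum_of_inj _ _ (fun q : ℕ × ℕ × ℕ => (q.2.1, q.2.2, q.1)) ?_ ?_ ?_
  · intro q q' h
    simp only [Prod.mk.injEq] at h
    simp only [Prod.ext_iff]
    omega
  · exact fun p _ => ⟨(p.2.2, p.1, p.2.1), rfl⟩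
  · intro q
    obtain ⟨x, y, z⟩ := q
    dsimp only [FF]
    rw [if_congr (tauE4 _) rfl rfl]
    dsimp only
    split_ifs <;> first | ring1 | rfl | (exfalso; omega)

lemma T5 : ∑' p : ℕ × ℕ × ℕ, (if tau p = 5 then FF l1 l2 l3 p else 0) = mzv ![l3, l2, l1] := by
  rw [mzv_triple]
  refine tsum_of_inj _ _ (fun q : ℕ × ℕ × ℕ => (q.2.2, q.2.1, q.1)) ?_ ?_ ?_
  · intro q q' h
    simp only [Prod.mk.injEq] at h
    simp only [Prod.ext_iff]
    omega
  · exact fun p _ => ⟨(p.2.2, p.2.1, p.1), rfl⟩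
  · intro q
    obtain ⟨x, y, z⟩ := q
    dsimp only [FF]
    rw [if_congr (tauE5 _) rfl rfl]
    dsimp only
    split_ifs <;> first | ring1 | rfl | (exfalso; omega)

lemma T6 : ∑' p : ℕ × ℕ × ℕ, (if tau p = 6 then FF l1 l2 l3 p else 0)
    = mzv ![l1 + l2, l3] := by
  rw [mzv_double]
  refine tsum_of_inj _ _ (fun q : ℕ × ℕ => (q.1, q.1, q.2)) ?_ ?_ ?_
  · intro q q' h
    simp only [Prod.mk.injEq] at h
    simp only [Prod.ext_iff]
    omega
  · intro p hp
    obtain ⟨a, b, c⟩ := p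
    have h6 : tau (a, b, c) = 6 := by by_contra h; simp [h] at hp
    obtain ⟨he, _⟩ := (tauE6 _).1 h6
    have hab : a = b := he
    subst hab
    exact ⟨(a, c), rfl⟩
  · intro q
    obtain ⟨x, y⟩ := q
    dsimp only [FF]
    rw [if_congr (show tau (x, x, y) = 6 ↔ y < x from (tauE6 _).trans (by simp)) rfl rfl]
    split_ifs with h
    · rw [z1_mul_z1]
    · rfl

lemma T7 : ∑' p : ℕ × ℕ × ℕ, (if tau p = 7 then FF l1 l2 l3 p else 0)
    = mzv ![l1 + l3, l2] := by
  rw [mzv_double]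
  refine tsum_of_inj _ _ (fun q : ℕ × ℕ => (q.1, q.2, q.1)) ?_ ?_ ?_
  · intro q q' h
    simp only [Prod.mk.injEq] at h
    simp only [Prod.ext_iff]
    omega
  · intro p hp
    obtain ⟨a, b, c⟩ := p
    have h6 : tau (a, b, c) = 7 := by by_contra h; simp [h] at hp
    obtain ⟨he, _⟩ := (tauE7 _).1 h6
    have hac : a = c := he
    subst hac
    exact ⟨(a, b), rfl⟩
  · intro q
    obtain ⟨x, y⟩ := q
    dsimp only [FF]
    rw [if_congr (show tau (x, y, x) = 7 ↔ y < x from (tauE7 _).trans (by simp)) rfl rfl]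
    split_ifs with h
    · rw [show z1 l1 x * z1 l2 y * z1 l3 x = z1 l1 x * z1 l3 x * z1 l2 y by ring, z1_mul_z1]
    · rfl

lemma T8 : ∑' p : ℕ × ℕ × ℕ, (if tau p = 8 then FF l1 l2 l3 p else 0)
    = mzv ![l2 + l3, l1] := by
  rw [mzv_double]
  refine tsum_of_inj _ _ (fun q : ℕ × ℕ => (q.2, q.1, q.1)) ?_ ?_ ?_
  · intro q q' h
    simp only [Prod.mk.injEq] at h
    simp only [Prod.ext_iff]
    omega
  · intro p hp
    obtain ⟨a, b, c⟩ := p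
    have h6 : tau (a, b, c) = 8 := by by_contra h; simp [h] at hp
    obtain ⟨he, _⟩ := (tauE8 _).1 h6
    have hbc : b = c := he
    subst hbc
    exact ⟨(b, a), rfl⟩
  · intro q
    obtain ⟨x, y⟩ := q
    dsimp only [FF]
    rw [if_congr (show tau (y, x, x) = 8 ↔ y < x from (tauE8 _).trans (by simp)) rfl rfl]
    split_ifs with h
    · rw [show z1 l1 y * z1 l2 x * z1 l3 x = z1 l2 x * z1 l3 x * z1 l1 y by ring, z1_mul_z1]
    · rfl

lemma T9 : ∑' p : ℕ × ℕ × ℕ, (if tau p = 9 then FF l1 l2 l3 p else 0)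
    = mzv ![l1, l2 + l3] := by
  rw [mzv_double]
  refine tsum_of_inj _ _ (fun q : ℕ × ℕ => (q.1, q.2, q.2)) ?_ ?_ ?_
  · intro q q' h
    simp only [Prod.mk.injEq] at h
    simp only [Prod.ext_iff]
    omega
  · intro p hp
    obtain ⟨a, b, c⟩ := p
    have h6 : tau (a, b, c) = 9 := by by_contra h; simp [h] at hp
    obtain ⟨he, _⟩ := (tauE9 _).1 h6
    have hbc : b = c := he
    subst hbc
    exact ⟨(a, b), rfl⟩
  · intro q
    obtain ⟨x, y⟩ := q
    dsimp only [FF]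
    rw [if_congr (show tau (x, y, y) = 9 ↔ y < x from (tauE9 _).trans (by simp)) rfl rfl]
    split_ifs with h
    · rw [mul_assoc, z1_mul_z1]
    · rfl

lemma T10 : ∑' p : ℕ × ℕ × ℕ, (if tau p = 10 then FF l1 l2 l3 p else 0)
    = mzv ![l2, l1 + l3] := by
  rw [mzv_double]
  refine tsum_of_inj _ _ (fun q : ℕ × ℕ => (q.2, q.1, q.2)) ?_ ?_ ?_
  · intro q q' h
    simp only [Prod.mk.injEq] at h
    simp only [Prod.ext_iff]
    omega
  · intro p hp
    obtain ⟨a, b, c⟩ := p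
    have h6 : tau (a, b, c) = 10 := by by_contra h; simp [h] at hp
    obtain ⟨he, _⟩ := (tauE10 _).1 h6
    have hac : a = c := he
    subst hac
    exact ⟨(b, a), rfl⟩
  · intro q
    obtain ⟨x, y⟩ := q
    dsimp only [FF]
    rw [if_congr (show tau (y, x, y) = 10 ↔ y < x from (tauE10 _).trans (by simp)) rfl rfl]
    split_ifs with h
    · rw [show z1 l1 y * z1 l2 x * z1 l3 y = z1 l2 x * (z1 l1 y * z1 l3 y) by ring, z1_mul_z1]
    · rfl

lemma T11 : ∑' p : ℕ × ℕ × ℕ, (if tau p = 11 then FF l1 l2 l3 p else 0)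
    = mzv ![l3, l1 + l2] := by
  rw [mzv_double]
  refine tsum_of_inj _ _ (fun q : ℕ × ℕ => (q.2, q.2, q.1)) ?_ ?_ ?_
  · intro q q' h
    simp only [Prod.mk.injEq] at h
    simp only [Prod.ext_iff]
    omega
  · intro p hp
    obtain ⟨a, b, c⟩ := p
    have h6 : tau (a, b, c) = 11 := by by_contra h; simp [h] at hp
    obtain ⟨he, _⟩ := (tauE11 _).1 h6
    have hab : a = b := he
    subst hab
    exact ⟨(c, a), rfl⟩
  · intro q
    obtain ⟨x, y⟩ := q
    dsimp only [FF]
    rw [if_congr (show tau (y, y, x) = 11 ↔ y < x from (tauE11 _).trans (by simp)) rfl rfl]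
    split_ifs with h
    · rw [show z1 l1 y * z1 l2 y * z1 l3 x = z1 l3 x * (z1 l1 y * z1 l2 y) by ring, z1_mul_z1]
    · rfl

lemma T12 : ∑' p : ℕ × ℕ × ℕ, (if tau p = 12 then FF l1 l2 l3 p else 0)
    = mzv ![l1 + l2 + l3] := by
  rw [mzv_single]
  refine tsum_of_inj _ _ (fun n : ℕ => (n, n, n)) ?_ ?_ ?_
  · intro q q' h
    simp only [Prod.mk.injEq] at h
    omega
  · intro p hp
    obtain ⟨a, b, c⟩ := p
    have h6 : tau (a, b, c) = 12 := by by_contra h; simp [h] at hp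
    obtain ⟨he, he'⟩ := (tauE12 _).1 h6
    have hab : a = b := he
    have hbc : b = c := he'
    subst hab; subst hbc
    exact ⟨a, rfl⟩
  · intro n
    dsimp only [FF]
    rw [if_congr (show tau (n, n, n) = 12 ↔ True from (tauE12 _).trans (by simp)) rfl rfl,
      if_pos trivial, z1_mul_z1, z1_mul_z1]

end regions

open Equiv in
lemma perm_sum (l1 l2 l3 : ℕ) :
    ∑ σ : Equiv.Perm (Fin 3), mzv (![l1, l2, l3] ∘ σ) =
      mzv ![l1, l2, l3] + mzv ![l1, l3, l2] + mzv ![l2, l1, l3] + mzv ![l2, l3, l1]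
        + mzv ![l3, l1, l2] + mzv ![l3, l2, l1] := by
  have huniv : (Finset.univ : Finset (Equiv.Perm (Fin 3))) =
      {1, swap 0 1, swap 0 2, swap 1 2, swap 0 1 * swap 1 2, swap 0 2 * swap 1 2} := by decide
  rw [huniv, Finset.sum_insert (by decide), Finset.sum_insert (by decide),
    Finset.sum_insert (by decide), Finset.sum_insert (by decide), Finset.sum_insert (by decide),
    Finset.sum_singleton]
  have c1 : ![l1, l2, l3] ∘ (1 : Equiv.Perm (Fin 3)) = ![l1, l2, l3] := by
    funext i; fin_cases i <;> rfl
  have c2 : ![l1, l2, l3] ∘ (swap 0 1 : Equiv.Perm (Fin 3)) = ![l2, l1, l3] := by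
    funext i; fin_cases i <;> rfl
  have c3 : ![l1, l2, l3] ∘ (swap 0 2 : Equiv.Perm (Fin 3)) = ![l3, l2, l1] := by
    funext i; fin_cases i <;> rfl
  have c4 : ![l1, l2, l3] ∘ (swap 1 2 : Equiv.Perm (Fin 3)) = ![l1, l3, l2] := by
    funext i; fin_cases i <;> rfl
  have c5 : ![l1, l2, l3] ∘ (swap 0 1 * swap 1 2 : Equiv.Perm (Fin 3)) = ![l2, l3, l1] := by
    funext i; fin_cases i <;> rfl
  have c6 : ![l1, l2, l3] ∘ (swap 0 2 * swap 1 2 : Equiv.Perm (Fin 3)) = ![l3, l1, l2] := by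
    funext i; fin_cases i <;> rfl
  rw [c1, c2, c3, c4, c5, c6]
  ring

theorem harmonic_relation_depth_three_second (l1 l2 l3 : ℕ)
    (h1 : 2 ≤ l1) (h2 : 2 ≤ l2) (h3 : 2 ≤ l3) :
    mzv ![l1] * mzv ![l2] * mzv ![l3] =
      (∑ σ : Equiv.Perm (Fin 3), mzv (![l1, l2, l3] ∘ σ))
        + mzv ![l1 + l2, l3] + mzv ![l1 + l3, l2] + mzv ![l2 + l3, l1]
        + mzv ![l1, l2 + l3] + mzv ![l2, l1 + l3] + mzv ![l3, l1 + l2]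
        + mzv ![l1 + l2 + l3] := by
  rw [prod_eq_tsum_FF h1 h2 h3, tsum_FF_split h1 h2 h3]
  rw [Finset.sum_range_succ, Finset.sum_range_succ, Finset.sum_range_succ,
    Finset.sum_range_succ, Finset.sum_range_succ, Finset.sum_range_succ,
    Finset.sum_range_succ, Finset.sum_range_succ, Finset.sum_range_succ,
    Finset.sum_range_succ, Finset.sum_range_succ, Finset.sum_range_succ,
    Finset.sum_range_one]
  rw [T0, T1, T2, T3, T4, T5, T6, T7, T8, T9, T10, T11, T12, perm_sum]
end

section
/- Let l1, l3, l4 be integers, each at least 2, and let l2 be a positive integer. Then ζ(l1,l2)·ζ(l3)·ζ(l4) = ζ(l1,l2)·ζ(l3,l4) + ζ(l1,l2)·ζ(l4,l3) + ζ(l3+l4,l1,l2) + ζ(l1,l3+l4,l2) + ζ(l1,l2,l3+l4) + ζ(l1+l3+l4,l2) + ζ(l1,l2+l3+l4). (Third identity of Proposition 3 (harmonic relations in depth 4) of the paper, restricted to convergent indices.) -/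
/-!
All sums are first taken in `ℝ≥0∞`, where they need no convergence hypotheses and may be
reindexed and split freely. There the identity is two applications of the stuffle (harmonic
product) rule: multiplying `ζ(l3) ζ(l4) = ζ(l3,l4) + ζ(l4,l3) + ζ(l3+l4)` by `ζ(l1,l2)`, the
last product `ζ(l1,l2) ζ(l3+l4)` is expanded by inserting the new summation index into the
chain `m > n` in each of its five possible positions. Finiteness of the left-hand side, from the
majorant `(m n)^(-3/2)` of the double sum, then lets `toReal` carry the identity over to `ℝ`.
-/

open scoped ENNReal

namespace ENNReal

variable {α β : Type*}

theorem tsum_mul_tsum (f : α → ℝ≥0∞) (g : β → ℝ≥0∞) :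
    (∑' a, f a) * ∑' b, g b = ∑' p : α × β, f p.1 * g p.2 := by
  rw [ENNReal.tsum_prod (f := fun a b => f a * g b), ← ENNReal.tsum_mul_right]
  simp_rw [ENNReal.tsum_mul_left]

theorem tsum_prod_ite_eq [DecidableEq α] (φ : β → α) (F : β × α → ℝ≥0∞) :
    ∑' x : β × α, (if x.2 = φ x.1 then F x else 0) = ∑' b, F (b, φ b) := by
  rw [ENNReal.tsum_prod']
  exact tsum_congr fun b => (tsum_eq_single (φ b) fun a ha => if_neg ha).trans (if_pos rfl)

end ENNReal

noncomputable def nestedSum₂ (f g : ℕ → ℝ≥0∞) : ℝ≥0∞ :=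
  ∑' p : ℕ × ℕ, if p.2 < p.1 then f p.1 * g p.2 else 0

noncomputable def nestedSum₃ (f g h : ℕ → ℝ≥0∞) : ℝ≥0∞ :=
  ∑' q : ℕ × ℕ × ℕ, if q.2.1 < q.1 ∧ q.2.2 < q.2.1 then f q.1 * g q.2.1 * h q.2.2 else 0

theorem tsum_mul_tsum_eq_nestedSum₂ (f g : ℕ → ℝ≥0∞) :
    (∑' m, f m) * ∑' n, g n = nestedSum₂ f g + nestedSum₂ g f + ∑' m, (f * g) m := by
  have hsplit : ∀ p : ℕ × ℕ, f p.1 * g p.2 =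
      (if p.2 < p.1 then f p.1 * g p.2 else 0) + (if p.1 < p.2 then g p.2 * f p.1 else 0)
        + (if p.2 = p.1 then f p.1 * g p.2 else 0) := by
    rintro ⟨m, n⟩
    split_ifs <;> first | omega | simp only [add_zero, zero_add, mul_comm]
  rw [ENNReal.tsum_mul_tsum, tsum_congr hsplit, ENNReal.tsum_add, ENNReal.tsum_add]
  congr 1; congr 1
  · rw [nestedSum₂, ← (Equiv.prodComm ℕ ℕ).tsum_eq]
    rfl
  · exact ENNReal.tsum_prod_ite_eq id _

theorem nestedSum₂_mul_tsum (f g h : ℕ → ℝ≥0∞) :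
    nestedSum₂ f g * ∑' r, h r = nestedSum₃ h f g + nestedSum₃ f h g + nestedSum₃ f g h
      + nestedSum₂ (f * h) g + nestedSum₂ f (g * h) := by
  -- the five positions of `r` relative to `n < m`
  have hsplit : ∀ x : (ℕ × ℕ) × ℕ,
      (if x.1.2 < x.1.1 then f x.1.1 * g x.1.2 else 0) * h x.2 =
        (if x.1.1 < x.2 ∧ x.1.2 < x.1.1 then h x.2 * f x.1.1 * g x.1.2 else 0)
        + (if x.2 < x.1.1 ∧ x.1.2 < x.2 then f x.1.1 * h x.2 * g x.1.2 else 0)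
        + (if x.1.2 < x.1.1 ∧ x.2 < x.1.2 then f x.1.1 * g x.1.2 * h x.2 else 0)
        + (if x.2 = x.1.1 then if x.1.2 < x.1.1 then f x.1.1 * g x.1.2 * h x.2 else 0 else 0)
        + (if x.2 = x.1.2 then if x.1.2 < x.1.1 then f x.1.1 * g x.1.2 * h x.2 else 0 else 0) := by
    rintro ⟨⟨m, n⟩, r⟩
    dsimp only
    split_ifs <;> first | omega | simp only [add_zero, zero_add, zero_mul] <;> ring
  rw [nestedSum₂, ENNReal.tsum_mul_tsum, tsum_congr hsplit, ENNReal.tsum_add, ENNReal.tsum_add,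
    ENNReal.tsum_add, ENNReal.tsum_add, ENNReal.tsum_prod_ite_eq Prod.fst,
    ENNReal.tsum_prod_ite_eq Prod.snd]
  congr 1; congr 1; congr 1; congr 1
  · rw [nestedSum₃, ← (Equiv.prodComm (ℕ × ℕ) ℕ).tsum_eq]
    rfl
  · rw [nestedSum₃, ← ((Equiv.prodAssoc ℕ ℕ ℕ).trans
      ((Equiv.refl ℕ).prodCongr (Equiv.prodComm ℕ ℕ))).tsum_eq]
    rfl
  · rw [nestedSum₃, ← (Equiv.prodAssoc ℕ ℕ ℕ).tsum_eq]
    rfl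
  · rw [nestedSum₂]
    simp only [Pi.mul_apply, mul_right_comm]
  · rw [nestedSum₂]
    simp only [Pi.mul_apply, mul_assoc]

theorem nestedSum₂_mul_tsum_mul_tsum (f g h k : ℕ → ℝ≥0∞) :
    nestedSum₂ f g * (∑' m, h m) * ∑' m, k m =
      nestedSum₂ f g * nestedSum₂ h k + nestedSum₂ f g * nestedSum₂ k h
        + nestedSum₃ (h * k) f g + nestedSum₃ f (h * k) g + nestedSum₃ f g (h * k)
        + nestedSum₂ (f * (h * k)) g + nestedSum₂ f (g * (h * k)) := by
  rw [mul_assoc, tsum_mul_tsum_eq_nestedSum₂, mul_add, nestedSum₂_mul_tsum]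
  ring

/-- `m ^ (-k)`, except that it vanishes at `m = 0`: this is how the constraint `m i ≥ 1` of `mzv`
is carried by the weights. -/
noncomputable def zetaWeight (k m : ℕ) : ℝ≥0∞ :=
  ENNReal.ofReal (if 1 ≤ m then 1 / (m : ℝ) ^ k else 0)

lemma zetaWeight_mul (a b : ℕ) : zetaWeight a * zetaWeight b = zetaWeight (a + b) := by
  ext m
  simp only [Pi.mul_apply, zetaWeight]
  split_ifs
  · rw [← ENNReal.ofReal_mul (by positivity), pow_add, one_div_mul_one_div]
  · simp

lemma zetaWeight_toReal (k m : ℕ) :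
    (zetaWeight k m).toReal = if 1 ≤ m then 1 / (m : ℝ) ^ k else 0 :=
  ENNReal.toReal_ofReal (by positivity)

lemma mzv_eq_toReal {n : ℕ} (l : Fin n → ℕ) :
    mzv l = (∑' m : Fin n → ℕ,
      if StrictAnti m then ∏ i, zetaWeight (l i) (m i) else 0).toReal := by
  rw [mzv, ENNReal.tsum_toReal_eq fun m => by
    split_ifs <;> simp [ENNReal.prod_ne_top, zetaWeight]]
  refine tsum_congr fun m => ?_
  by_cases hm : StrictAnti m
  · simp only [hm, true_and, if_true, ENNReal.toReal_prod, zetaWeight_toReal,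
      Fintype.prod_ite_zero]
    congr
  · simp [hm]

lemma mzv_singleton_s9 (k : ℕ) : mzv ![k] = (∑' m, zetaWeight k m).toReal := by
  rw [mzv_eq_toReal, ← (Equiv.funUnique (Fin 1) ℕ).symm.tsum_eq]
  simp [Subsingleton.strictAnti]

lemma mzv_pair (a b : ℕ) :
    mzv ![a, b] = (nestedSum₂ (zetaWeight a) (zetaWeight b)).toReal := by
  rw [mzv_eq_toReal, ← (piFinTwoEquiv fun _ => ℕ).symm.tsum_eq]
  simp [nestedSum₂, Fin.strictAnti_iff_succ_lt, Fin.prod_univ_two]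

lemma mzv_triple_s9 (a b c : ℕ) :
    mzv ![a, b, c] = (nestedSum₃ (zetaWeight a) (zetaWeight b) (zetaWeight c)).toReal := by
  rw [mzv_eq_toReal, ← (((Equiv.refl ℕ).prodCongr (piFinTwoEquiv fun _ => ℕ).symm).trans
    (Fin.consEquiv fun _ => ℕ)).tsum_eq]
  simp [nestedSum₃, Fin.strictAnti_iff_succ_lt, Fin.forall_fin_two, Fin.prod_univ_three]

lemma one_div_pow_le_rpow_neg {x : ℝ} (hx : 1 ≤ x) {k : ℕ} {s : ℝ} (hsk : s ≤ k) :
    1 / x ^ k ≤ x ^ (-s) := by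
  rw [one_div, ← Real.rpow_natCast, ← Real.rpow_neg (by linarith)]
  exact Real.rpow_le_rpow_of_exponent_le hx (neg_le_neg hsk)

lemma rpow_neg_two_mul_rpow_neg_one_le {x y : ℝ} (hy : 0 < y) (hyx : y ≤ x) :
    x ^ (-2 : ℝ) * y ^ (-1 : ℝ) ≤ x ^ (-(3 / 2) : ℝ) * y ^ (-(3 / 2) : ℝ) := by
  have hx : 0 < x := hy.trans_le hyx
  calc x ^ (-2 : ℝ) * y ^ (-1 : ℝ)
        = x ^ (-(3 / 2) : ℝ) * x ^ (-(1 / 2) : ℝ) * y ^ (-1 : ℝ) := by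
        rw [← Real.rpow_add hx]; norm_num
    _ ≤ x ^ (-(3 / 2) : ℝ) * y ^ (-(1 / 2) : ℝ) * y ^ (-1 : ℝ) := by
        refine mul_le_mul_of_nonneg_right (mul_le_mul_of_nonneg_left ?_ (by positivity))
          (by positivity)
        exact Real.rpow_le_rpow_of_nonpos hy hyx (by norm_num)
    _ = x ^ (-(3 / 2) : ℝ) * y ^ (-(3 / 2) : ℝ) := by
        rw [mul_assoc, ← Real.rpow_add hy]; norm_num

/-- For `1 ≤ n < m`, `a ≥ 2` and `b ≥ 1`, `m ^ (-a) * n ^ (-b) ≤ m ^ (-2) * n ^ (-1)`, which is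
at most `(m * n) ^ (-3/2)`; so this summable sequence dominates the weights of depth one and two. -/
noncomputable def zetaMajorant (m : ℕ) : ℝ≥0∞ := ENNReal.ofReal ((m : ℝ) ^ (-(3 / 2) : ℝ))

lemma tsum_zetaMajorant_ne_top : ∑' m, zetaMajorant m ≠ ⊤ :=
  (Real.summable_nat_rpow.2 (by norm_num)).tsum_ofReal_ne_top

lemma zetaWeight_le_zetaMajorant {k : ℕ} (hk : 2 ≤ k) (m : ℕ) :
    zetaWeight k m ≤ zetaMajorant m := by
  unfold zetaWeight zetaMajorant
  split_ifs with hm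
  · refine ENNReal.ofReal_le_ofReal (one_div_pow_le_rpow_neg (by exact_mod_cast hm) ?_)
    have : (2 : ℝ) ≤ k := by exact_mod_cast hk
    linarith
  · simp

lemma zetaWeight_mul_zetaWeight_le {a b m n : ℕ} (ha : 2 ≤ a) (hb : 1 ≤ b) (hnm : n < m) :
    zetaWeight a m * zetaWeight b n ≤ zetaMajorant m * zetaMajorant n := by
  unfold zetaWeight zetaMajorant
  split_ifs with _ hn
  · have hn' : (1 : ℝ) ≤ n := by exact_mod_cast hn
    have hnm' : (n : ℝ) ≤ m := by exact_mod_cast hnm.le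
    rw [← ENNReal.ofReal_mul (by positivity), ← ENNReal.ofReal_mul (by positivity)]
    refine ENNReal.ofReal_le_ofReal ((mul_le_mul ?_ ?_ (by positivity) (by positivity)).trans
      (rpow_neg_two_mul_rpow_neg_one_le (by positivity) hnm'))
    · exact one_div_pow_le_rpow_neg (hn'.trans hnm') (by exact_mod_cast ha)
    · exact one_div_pow_le_rpow_neg hn' (by exact_mod_cast hb)
  all_goals simp

lemma tsum_zetaWeight_ne_top {k : ℕ} (hk : 2 ≤ k) : ∑' m, zetaWeight k m ≠ ⊤ :=
  ne_top_of_le_ne_top tsum_zetaMajorant_ne_top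
    (ENNReal.tsum_le_tsum (zetaWeight_le_zetaMajorant hk))

lemma nestedSum₂_zetaWeight_ne_top {a b : ℕ} (ha : 2 ≤ a) (hb : 1 ≤ b) :
    nestedSum₂ (zetaWeight a) (zetaWeight b) ≠ ⊤ := by
  refine ne_top_of_le_ne_top
    (ENNReal.mul_ne_top tsum_zetaMajorant_ne_top tsum_zetaMajorant_ne_top) ?_
  rw [ENNReal.tsum_mul_tsum]
  refine ENNReal.tsum_le_tsum fun p => ?_
  split_ifs with hp
  · exact zetaWeight_mul_zetaWeight_le ha hb hp
  · exact zero_le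

theorem harmonic_relation_depth_four_third (l1 l2 l3 l4 : ℕ)
    (h1 : 2 ≤ l1) (h2 : 1 ≤ l2) (h3 : 2 ≤ l3) (h4 : 2 ≤ l4) :
    mzv ![l1, l2] * mzv ![l3] * mzv ![l4] =
      mzv ![l1, l2] * mzv ![l3, l4] + mzv ![l1, l2] * mzv ![l4, l3]
        + mzv ![l3 + l4, l1, l2] + mzv ![l1, l3 + l4, l2] + mzv ![l1, l2, l3 + l4]
        + mzv ![l1 + l3 + l4, l2] + mzv ![l1, l2 + l3 + l4] := by
  have hstuffle := nestedSum₂_mul_tsum_mul_tsum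
    (zetaWeight l1) (zetaWeight l2) (zetaWeight l3) (zetaWeight l4)
  simp only [zetaWeight_mul, ← add_assoc l1, ← add_assoc l2] at hstuffle
  have hfinite := ENNReal.mul_ne_top (ENNReal.mul_ne_top (nestedSum₂_zetaWeight_ne_top h1 h2)
    (tsum_zetaWeight_ne_top h3)) (tsum_zetaWeight_ne_top h4)
  simp only [hstuffle, ENNReal.add_ne_top] at hfinite
  simp only [mzv_singleton_s9, mzv_pair, mzv_triple_s9]
  rw [← ENNReal.toReal_mul, ← ENNReal.toReal_mul, hstuffle]
  simp [ENNReal.toReal_add, hfinite]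
end
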